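/- arXiv:0707.1635 — 6 statements merged into one kernel-verified Lean document; each statement's English description precedes it below -/
import Mathlib

section
/- For all integers d1, d2 ≥ 0 the rational functions I_{d1,d2} satisfy the quantum Toda recursion: (z1⁻¹(q^{d1} − 1) + (q^{d2−d1} − 1) + z2(q^{−d2} − 1)) · I_{d1,d2}(z1,z2) = q^{d2−d1} · I_{d1−1,d2}(z1,z2) + z2 q^{−d2} · I_{d1,d2−1}(z1,z2), as an identity in the field ℚ(q,z1,z2). -/
/-!
STATEMENT 0: the quantum Toda recursion for the rational functions `I_{d1,d2}`,
as an identity in the field `ℚ(q,z1,z2)`, with the convention `I_{d1,d2} = 0`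
when `d1 < 0` or `d2 < 0`.
-/

noncomputable section

open scoped BigOperators

/-- The rational function field `ℚ(q,z1,z2)`. -/
abbrev K : Type := FractionRing (MvPolynomial (Fin 3) ℚ)

def q : K := algebraMap (MvPolynomial (Fin 3) ℚ) K (MvPolynomial.X 0)
def z1 : K := algebraMap (MvPolynomial (Fin 3) ℚ) K (MvPolynomial.X 1)
def z2 : K := algebraMap (MvPolynomial (Fin 3) ℚ) K (MvPolynomial.X 2)

/-- `(a)_n = ∏_{i=0}^{n-1} (1 - a q^i)`. -/
def poch (a : K) (n : ℕ) : K := ∏ i ∈ Finset.range n, (1 - a * q ^ i)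

/-- `I_{d1,d2}(z1,z2)`, extended by `0` for negative indices. -/
def II : ℤ → ℤ → K := fun d1 d2 =>
  if 0 ≤ d1 ∧ 0 ≤ d2 then
    poch (q * z1⁻¹ * z2⁻¹) (d1.toNat + d2.toNat) /
      (poch q d1.toNat * poch q d2.toNat * poch (q * z1⁻¹) d1.toNat *
        poch (q * z2⁻¹) d2.toNat * poch (q * z1⁻¹ * z2⁻¹) d1.toNat *
        poch (q * z1⁻¹ * z2⁻¹) d2.toNat)
  else 0


/-! ### Auxiliary lemmas -/

lemma alg_inj : Function.Injective (algebraMap (MvPolynomial (Fin 3) ℚ) K) :=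
  IsFractionRing.injective _ _

lemma q_ne : (q : K) ≠ 0 := by
  simp only [q, Ne, IsFractionRing.to_map_eq_zero_iff]
  exact MvPolynomial.X_ne_zero 0

lemma z1_ne : (z1 : K) ≠ 0 := by
  simp only [z1, Ne, IsFractionRing.to_map_eq_zero_iff]
  exact MvPolynomial.X_ne_zero 1

lemma z2_ne : (z2 : K) ≠ 0 := by
  simp only [z2, Ne, IsFractionRing.to_map_eq_zero_iff]
  exact MvPolynomial.X_ne_zero 2

lemma hne_q1 (i : ℕ) : (q : K) ^ (i+1) ≠ 1 := by
  intro h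
  have h' : (MvPolynomial.X 0 : MvPolynomial (Fin 3) ℚ) ^ (i+1) = 1 := by
    apply alg_inj
    simpa [q, map_pow] using h
  have := congrArg (MvPolynomial.eval fun _ : Fin 3 => (0:ℚ)) h'
  simp [pow_succ] at this

lemma hne_qz1 (i : ℕ) : (q : K) ^ (i+1) ≠ z1 := by
  intro h
  have h' : (MvPolynomial.X 0 : MvPolynomial (Fin 3) ℚ) ^ (i+1) = MvPolynomial.X 1 := by
    apply alg_inj
    simpa [q, z1, map_pow] using h
  have := congrArg (MvPolynomial.eval fun j : Fin 3 => if j = 1 then (1:ℚ) else 0) h'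
  simp [pow_succ] at this

lemma hne_qz2 (i : ℕ) : (q : K) ^ (i+1) ≠ z2 := by
  intro h
  have h' : (MvPolynomial.X 0 : MvPolynomial (Fin 3) ℚ) ^ (i+1) = MvPolynomial.X 2 := by
    apply alg_inj
    simpa [q, z2, map_pow] using h
  have := congrArg (MvPolynomial.eval fun j : Fin 3 => if j = 2 then (1:ℚ) else 0) h'
  simp [pow_succ] at this

lemma hne_qz12 (j : ℕ) : (q : K) ^ j ≠ z1 * z2 := by
  intro h
  have h' : (MvPolynomial.X 0 : MvPolynomial (Fin 3) ℚ) ^ j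
      = MvPolynomial.X 1 * MvPolynomial.X 2 := by
    apply alg_inj
    simpa [q, z1, z2, map_pow, map_mul] using h
  have := congrArg (MvPolynomial.eval fun i : Fin 3 => if i = 0 then (1:ℚ) else 0) h'
  simp at this

lemma f_q (i : ℕ) : (1 : K) - q * q ^ i ≠ 0 := by
  intro h
  apply hne_q1 i
  rw [pow_succ']
  linear_combination -h

lemma f_qz1 (i : ℕ) : (1 : K) - q * z1⁻¹ * q ^ i ≠ 0 := by
  intro h
  apply hne_qz1 i
  rw [pow_succ']
  rw [sub_eq_zero] at h
  field_simp [z1_ne] at h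
  linear_combination -h

lemma f_qz2 (i : ℕ) : (1 : K) - q * z2⁻¹ * q ^ i ≠ 0 := by
  intro h
  apply hne_qz2 i
  rw [pow_succ']
  rw [sub_eq_zero] at h
  field_simp [z2_ne] at h
  linear_combination -h

lemma f_z12 (j : ℕ) : (1 : K) - z1⁻¹ * z2⁻¹ * q ^ j ≠ 0 := by
  intro h
  apply hne_qz12 j
  rw [sub_eq_zero] at h
  field_simp [z1_ne, z2_ne] at h
  linear_combination -h

lemma f_qz12 (i : ℕ) : (1 : K) - q * z1⁻¹ * z2⁻¹ * q ^ i ≠ 0 := by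
  have := f_z12 (i+1)
  intro h
  apply this
  rw [pow_succ']
  linear_combination h

lemma poch_succ (a : K) (n : ℕ) : poch a (n+1) = poch a n * (1 - a * q ^ n) :=
  Finset.prod_range_succ _ _

lemma poch_q_ne (n : ℕ) : poch q n ≠ 0 :=
  Finset.prod_ne_zero_iff.mpr fun i _ => f_q i

lemma poch_qz1_ne (n : ℕ) : poch (q * z1⁻¹) n ≠ 0 :=
  Finset.prod_ne_zero_iff.mpr fun i _ => f_qz1 i

lemma poch_qz2_ne (n : ℕ) : poch (q * z2⁻¹) n ≠ 0 :=
  Finset.prod_ne_zero_iff.mpr fun i _ => f_qz2 i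

lemma poch_qz12_ne (n : ℕ) : poch (q * z1⁻¹ * z2⁻¹) n ≠ 0 :=
  Finset.prod_ne_zero_iff.mpr fun i _ => f_qz12 i

lemma II_nat (n m : ℕ) : II n m =
    poch (q * z1⁻¹ * z2⁻¹) (n + m) /
      (poch q n * poch q m * poch (q * z1⁻¹) n *
        poch (q * z2⁻¹) m * poch (q * z1⁻¹ * z2⁻¹) n *
        poch (q * z1⁻¹ * z2⁻¹) m) := by
  simp [II]

lemma ratio1 (n m : ℕ) :
    II n m * ((1 - q ^ n) * (1 - z1⁻¹ * q ^ n) * (1 - z1⁻¹ * z2⁻¹ * q ^ n))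
      = II ((n : ℤ) - 1) m * (1 - z1⁻¹ * z2⁻¹ * q ^ (n + m)) := by
  cases n with
  | zero => norm_num [II]
  | succ k =>
    have hk : (((k+1 : ℕ)) : ℤ) - 1 = ((k : ℕ) : ℤ) := by push_cast; ring
    have hD1 := mul_ne_zero (mul_ne_zero (mul_ne_zero (mul_ne_zero (mul_ne_zero
      (poch_q_ne (k+1)) (poch_q_ne m)) (poch_qz1_ne (k+1))) (poch_qz2_ne m))
      (poch_qz12_ne (k+1))) (poch_qz12_ne m)
    have hD2 := mul_ne_zero (mul_ne_zero (mul_ne_zero (mul_ne_zero (mul_ne_zero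
      (poch_q_ne k) (poch_q_ne m)) (poch_qz1_ne k)) (poch_qz2_ne m))
      (poch_qz12_ne k)) (poch_qz12_ne m)
    rw [hk, II_nat, II_nat, div_mul_eq_mul_div, div_mul_eq_mul_div,
      div_eq_div_iff hD1 hD2, show k + 1 + m = (k + m) + 1 by omega,
      poch_succ, poch_succ, poch_succ, poch_succ]
    ring

lemma ratio2 (n m : ℕ) :
    II n m * ((1 - q ^ m) * (1 - z2⁻¹ * q ^ m) * (1 - z1⁻¹ * z2⁻¹ * q ^ m))
      = II n ((m : ℤ) - 1) * (1 - z1⁻¹ * z2⁻¹ * q ^ (n + m)) := by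
  cases m with
  | zero => norm_num [II]
  | succ k =>
    have hk : (((k+1 : ℕ)) : ℤ) - 1 = ((k : ℕ) : ℤ) := by push_cast; ring
    have hD1 := mul_ne_zero (mul_ne_zero (mul_ne_zero (mul_ne_zero (mul_ne_zero
      (poch_q_ne n) (poch_q_ne (k+1))) (poch_qz1_ne n)) (poch_qz2_ne (k+1)))
      (poch_qz12_ne n)) (poch_qz12_ne (k+1))
    have hD2 := mul_ne_zero (mul_ne_zero (mul_ne_zero (mul_ne_zero (mul_ne_zero
      (poch_q_ne n) (poch_q_ne k)) (poch_qz1_ne n)) (poch_qz2_ne k))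
      (poch_qz12_ne n)) (poch_qz12_ne k)
    rw [hk, II_nat, II_nat, div_mul_eq_mul_div, div_mul_eq_mul_div,
      div_eq_div_iff hD1 hD2, show n + (k + 1) = (n + k) + 1 by omega,
      poch_succ, poch_succ, poch_succ, poch_succ]
    ring

lemma scalar (a b w x X y Y : K) (hx : x * X = 1) (hy : y * Y = 1) (hw : w * b = 1) :
    (a * (x - 1) + (y * X - 1) + w * (Y - 1)) * (1 - a * b * (x * y))
      = y * X * ((1 - x) * (1 - a * x) * (1 - a * b * x))
        + w * Y * ((1 - y) * (1 - b * y) * (1 - a * b * y)) := by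
  linear_combination
    (y + a*y - a*x*y + a*b*y - a*b*y^2 - a*b*x*y - a^2*b*x*y + a^2*b*x^2*y) * hx
    + (w + b*w - b*w*y + a*b*w - a*b*w*y - a*b*w*x - a*b^2*w*y + a*b^2*w*y^2) * hy
    + (1 - y + a - a*y - a*x + a*x*y - a*b*y + a*b*y^2) * hw


set_option maxHeartbeats 2000000 in
/-- The quantum Toda recursion for `I_{d1,d2}`. -/
theorem toda_recursion (d1 d2 : ℤ) (h1 : 0 ≤ d1) (h2 : 0 ≤ d2) :
    (z1⁻¹ * (q ^ d1 - 1) + (q ^ (d2 - d1) - 1) + z2 * (q ^ (-d2) - 1)) * II d1 d2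
      = q ^ (d2 - d1) * II (d1 - 1) d2 + z2 * q ^ (-d2) * II d1 (d2 - 1) := by
  obtain ⟨n, rfl⟩ := Int.eq_ofNat_of_zero_le h1
  obtain ⟨m, rfl⟩ := Int.eq_ofNat_of_zero_le h2
  have e1 : (q : K) ^ ((m : ℤ) - (n : ℤ)) = q ^ m / q ^ n := by
    rw [zpow_sub₀ q_ne, zpow_natCast, zpow_natCast]
  have e2 : (q : K) ^ (-(m : ℤ)) = (q ^ m)⁻¹ := by
    rw [zpow_neg, zpow_natCast]
  have e3 : (q : K) ^ ((n : ℤ)) = q ^ n := zpow_natCast _ _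
  rw [e1, e2, e3]
  refine mul_right_cancel₀ (f_z12 (n + m)) ?_
  linear_combination (q ^ m / q ^ n) * ratio1 n m + (z2 * (q ^ m)⁻¹) * ratio2 n m
    + II n m * scalar z1⁻¹ z2⁻¹ z2 (q ^ n) (q ^ n)⁻¹ (q ^ m) (q ^ m)⁻¹
        (mul_inv_cancel₀ (pow_ne_zero _ q_ne)) (mul_inv_cancel₀ (pow_ne_zero _ q_ne))
        (mul_inv_cancel₀ z2_ne)

end
end

section
/- Suppose given series φ̄_{l1,l2,l3} ∈ S for (l1,l2,l3) ∈ R̄_U and ψ̄_{l1,l2,l3} ∈ S for (l1,l2,l3) ∈ R_V, extended by the conventions: any series with a negative index is 0; φ̄_{l1,l2,l3} := φ̄_{l1,l2,min(l1,l2)} when l3 > min(l1,l2); ψ̄_{l1,l2,l3} := ψ̄_{l1,l2,l1+l2} when l3 > l1+l2. Assume the coefficientwise inequalities: (M1) for (l1,l2,l3) ∈ R_U: φ̄_{l1,l2,l3}(z1,z2) ≤ φ̄_{l1,l2−1,l3}(z1,z2) + z2^{l2}·ψ̄_{l3,k2−l2,l1}(q⁻¹z1,qz2); (M2) for (l1,l2,l3)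 ∈ R_V: ψ̄_{l1,l2,l3}(z1,z2) ≤ ψ̄_{l1,l2−1,l3}(z1,z2) + z2^{l2}·φ̄_{l3,k2−l2,l1}(z1,qz2); (M3) for (l1,l2,l3) ∈ R̄_U with l1+l2−l3 ≠ k2 or l3 = 0: φ̄_{l1,l2,l3}(z1,z2) ≤ φ̄_{l1,l2,l3−1}(z1,z2) + (q⁻¹z1z2)^{l3}·ψ̄_{l1−l3,l2−l3,k1−l3}(z1,z2); (M4) for (l1,l2,l3) ∈ R_V: ψ̄_{l1,l2,l3}(z1,z2) ≤ ψ̄_{l1−1,l2,l3}(z1,z2) + z1^{l1}·φ̄_{k1−l1,l1+l2,l3−l1}(qz1,z2). Assume further that all coefficients of all the series φ̄ and ψ̄ are nonnegative integers, and that the coefficient of z1^0 z2^0 in ψ̄_{0,0,0} (a Laurent series in q) is zero. Then all the series φ̄_{l1,l2,l3} and ψ̄_{l1,l2,l3} are identically zero. -/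
/-!
STATEMENT 8: uniqueness (vanishing) for the SES-recursion inequalities.
A series in `S` (formal power series in `z1,z2` with coefficients formal Laurent series
in `q`, integer coefficients) is encoded by its coefficient function
`c : ℕ → ℕ → ℤ → ℤ`, `c i j d` = coefficient of `z1^i z2^j q^d`, together with the
condition that for each `(i,j)` the `q`-support is bounded below.
-/

noncomputable section

/-- Coefficient functions of series in `S`. -/
abbrev S8 : Type := ℕ → ℕ → ℤ → ℤ

/-- `f(q^a z1, q^b z2)`: the coefficient of `z1^i z2^j` gets multiplied by `q^{ai+bj}`. -/
def shiftQ8 (a b : ℤ) (f : S8) : S8 := fun i j d => f i j (d - a * i - b * j)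

/-- multiplication by the monomial `z1^p z2^r q^s`. -/
def mulMon8 (p r s : ℤ) (f : S8) : S8 := fun i j d =>
  if p ≤ (i : ℤ) ∧ r ≤ (j : ℤ) then f ((i : ℤ) - p).toNat ((j : ℤ) - r).toNat (d - s) else 0

/-- the coefficients form a Laurent power series in `q`. -/
def IsLaurent (f : S8) : Prop := ∀ i j, ∃ D : ℤ, ∀ d, d < D → f i j d = 0

def inPU (k1 k2 l1 l2 l3 : ℤ) : Prop :=
  0 ≤ l1 ∧ l1 ≤ k1 ∧ 0 ≤ l2 ∧ l2 ≤ k2 ∧ 0 ≤ l3 ∧ l3 ≤ min l1 l2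

def inPV (k1 k2 l1 l2 l3 : ℤ) : Prop :=
  0 ≤ l1 ∧ l1 ≤ k1 ∧ 0 ≤ l2 ∧ l2 ≤ k2 ∧ l1 ≤ l3 ∧ l3 ≤ min (l1 + l2) k1

def inRU (k1 k2 l1 l2 l3 : ℤ) : Prop :=
  inPU k1 k2 l1 l2 l3 ∧ k1 ≤ l1 + l2 - l3 ∧ l1 + l2 - l3 ≤ k2

def inRV (k1 k2 l1 l2 l3 : ℤ) : Prop :=
  inPV k1 k2 l1 l2 l3 ∧ 0 ≤ l1 + l2 - l3 ∧ l1 + l2 - l3 ≤ k2 - k1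

def inRbarU (k1 k2 l1 l2 l3 : ℤ) : Prop :=
  inPU k1 k2 l1 l2 l3 ∧ 0 ≤ l1 + l2 - l3 ∧ l1 + l2 - l3 ≤ k2

/-! ### auxiliary lemmas -/

lemma inRbarU_iff' (k1 k2 l1 l2 l3 : ℤ) : inRbarU k1 k2 l1 l2 l3 ↔
    0 ≤ l1 ∧ l1 ≤ k1 ∧ 0 ≤ l2 ∧ l2 ≤ k2 ∧ 0 ≤ l3 ∧ l3 ≤ l1 ∧ l3 ≤ l2 ∧
    0 ≤ l1 + l2 - l3 ∧ l1 + l2 - l3 ≤ k2 := by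
  unfold inRbarU inPU; omega

lemma inRU_iff' (k1 k2 l1 l2 l3 : ℤ) : inRU k1 k2 l1 l2 l3 ↔
    0 ≤ l1 ∧ l1 ≤ k1 ∧ 0 ≤ l2 ∧ l2 ≤ k2 ∧ 0 ≤ l3 ∧ l3 ≤ l1 ∧ l3 ≤ l2 ∧
    k1 ≤ l1 + l2 - l3 ∧ l1 + l2 - l3 ≤ k2 := by
  unfold inRU inPU; omega

lemma inRV_iff' (k1 k2 l1 l2 l3 : ℤ) : inRV k1 k2 l1 l2 l3 ↔
    0 ≤ l1 ∧ l1 ≤ k1 ∧ 0 ≤ l2 ∧ l2 ≤ k2 ∧ l1 ≤ l3 ∧ l3 ≤ l1 + l2 ∧ l3 ≤ k1 ∧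
    0 ≤ l1 + l2 - l3 ∧ l1 + l2 - l3 ≤ k2 - k1 := by
  unfold inRV inPV; omega

lemma mulMon8_apply {p r s : ℤ} (f : S8) {i j : ℕ} (d : ℤ)
    (hp : p ≤ (i : ℤ)) (hr : r ≤ (j : ℤ)) :
    mulMon8 p r s f i j d = f ((i : ℤ) - p).toNat ((j : ℤ) - r).toNat (d - s) :=
  if_pos ⟨hp, hr⟩

lemma mulMon8_zero {p r s : ℤ} (f : S8) {i j : ℕ} (d : ℤ)
    (h : ¬ (p ≤ (i : ℤ) ∧ r ≤ (j : ℤ))) :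
    mulMon8 p r s f i j d = 0 :=
  if_neg h

theorem vanishing_of_SES_inequalities (k1 k2 : ℤ) (hk1 : 0 ≤ k1) (hk12 : k1 ≤ k2)
    (φ ψ : ℤ → ℤ → ℤ → S8)
    -- conventions: a series with a negative index is 0
    (hφneg : ∀ l1 l2 l3, l1 < 0 ∨ l2 < 0 ∨ l3 < 0 → φ l1 l2 l3 = 0)
    (hψneg : ∀ l1 l2 l3, l1 < 0 ∨ l2 < 0 ∨ l3 < 0 → ψ l1 l2 l3 = 0)
    -- conventions: φ̄_{l1,l2,l3} = φ̄_{l1,l2,min(l1,l2)} for l3 > min(l1,l2),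
    -- ψ̄_{l1,l2,l3} = ψ̄_{l1,l2,l1+l2} for l3 > l1+l2
    (hφconv : ∀ l1 l2 l3, 0 ≤ l1 → 0 ≤ l2 → min l1 l2 < l3 → φ l1 l2 l3 = φ l1 l2 (min l1 l2))
    (hψconv : ∀ l1 l2 l3, 0 ≤ l1 → 0 ≤ l2 → l1 + l2 < l3 → ψ l1 l2 l3 = ψ l1 l2 (l1 + l2))
    -- membership in S
    (hφL : ∀ l1 l2 l3, inRbarU k1 k2 l1 l2 l3 → IsLaurent (φ l1 l2 l3))
    (hψL : ∀ l1 l2 l3, inRV k1 k2 l1 l2 l3 → IsLaurent (ψ l1 l2 l3))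
    -- (M1)
    (hM1 : ∀ l1 l2 l3, inRU k1 k2 l1 l2 l3 → ∀ i j d,
      φ l1 l2 l3 i j d ≤ φ l1 (l2 - 1) l3 i j d
        + mulMon8 0 l2 0 (shiftQ8 (-1) 1 (ψ l3 (k2 - l2) l1)) i j d)
    -- (M2)
    (hM2 : ∀ l1 l2 l3, inRV k1 k2 l1 l2 l3 → ∀ i j d,
      ψ l1 l2 l3 i j d ≤ ψ l1 (l2 - 1) l3 i j d
        + mulMon8 0 l2 0 (shiftQ8 0 1 (φ l3 (k2 - l2) l1)) i j d)
    -- (M3)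
    (hM3 : ∀ l1 l2 l3, inRbarU k1 k2 l1 l2 l3 → (l1 + l2 - l3 ≠ k2 ∨ l3 = 0) → ∀ i j d,
      φ l1 l2 l3 i j d ≤ φ l1 l2 (l3 - 1) i j d
        + mulMon8 l3 l3 (-l3) (ψ (l1 - l3) (l2 - l3) (k1 - l3)) i j d)
    -- (M4)
    (hM4 : ∀ l1 l2 l3, inRV k1 k2 l1 l2 l3 → ∀ i j d,
      ψ l1 l2 l3 i j d ≤ ψ (l1 - 1) l2 l3 i j d
        + mulMon8 l1 0 0 (shiftQ8 1 0 (φ (k1 - l1) (l1 + l2) (l3 - l1))) i j d)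
    -- all coefficients nonnegative
    (hφpos : ∀ l1 l2 l3, inRbarU k1 k2 l1 l2 l3 → ∀ i j d, 0 ≤ φ l1 l2 l3 i j d)
    (hψpos : ∀ l1 l2 l3, inRV k1 k2 l1 l2 l3 → ∀ i j d, 0 ≤ ψ l1 l2 l3 i j d)
    -- the coefficient of z1^0 z2^0 in ψ̄_{0,0,0} vanishes
    (hconst : ∀ d : ℤ, ψ 0 0 0 0 0 d = 0) :
    (∀ l1 l2 l3, inRbarU k1 k2 l1 l2 l3 → φ l1 l2 l3 = 0) ∧
      (∀ l1 l2 l3, inRV k1 k2 l1 l2 l3 → ψ l1 l2 l3 = 0) := by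
  classical
  have main : ∀ n : ℕ, ∀ i j : ℕ, i + j = n →
      (∀ l1 l2 l3, inRbarU k1 k2 l1 l2 l3 → ∀ d, φ l1 l2 l3 i j d = 0) ∧
      (∀ l1 l2 l3, inRV k1 k2 l1 l2 l3 → ∀ d, ψ l1 l2 l3 i j d = 0) := by
    intro n
    induction n using Nat.strong_induction_on with
    | _ n OIH =>
    rintro i j rfl
    have IHφ : ∀ i' j' : ℕ, i' + j' < i + j →
        ∀ l1 l2 l3, inRbarU k1 k2 l1 l2 l3 → ∀ d, φ l1 l2 l3 i' j' d = 0 :=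
      fun i' j' h => (OIH (i' + j') h i' j' rfl).1
    have IHψ : ∀ i' j' : ℕ, i' + j' < i + j →
        ∀ l1 l2 l3, inRV k1 k2 l1 l2 l3 → ∀ d, ψ l1 l2 l3 i' j' d = 0 :=
      fun i' j' h => (OIH (i' + j') h i' j' rfl).2
    -- Step: from vanishing of all ψ's at (i,j,d) deduce vanishing of all φ's at (i,j,d).
    have phiStep : ∀ d : ℤ, (∀ l1 l2 l3, inRV k1 k2 l1 l2 l3 → ψ l1 l2 l3 i j d = 0) →
        ∀ l1 l2 l3, inRbarU k1 k2 l1 l2 l3 → φ l1 l2 l3 i j d = 0 := by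
      intro d Hψ
      have key : ∀ a b : ℕ, ∀ l1 l2 l3, inRbarU k1 k2 l1 l2 l3 → l2 ≤ (a : ℤ) → l3 ≤ (b : ℤ) →
          φ l1 l2 l3 i j d = 0 := by
        intro a
        induction a using Nat.strong_induction_on with
        | _ a IHa =>
        intro b
        induction b using Nat.strong_induction_on with
        | _ b IHb =>
        intro l1 l2 l3 hR hla hlb
        obtain ⟨h1, h2, h3, h4, h5, h6, h7, h8, h9⟩ := (inRbarU_iff' k1 k2 l1 l2 l3).mp hR
        have hpos := hφpos l1 l2 l3 hR i j d
        by_cases h30 : l3 = 0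
        · subst h30
          have h := hM3 l1 l2 0 hR (Or.inr rfl) i j d
          have hA : φ l1 l2 (0 - 1) i j d = 0 := by
            rw [hφneg l1 l2 (0 - 1) (Or.inr (Or.inr (by norm_num)))]; simp
          have hB : mulMon8 0 0 (-0) (ψ (l1 - 0) (l2 - 0) (k1 - 0)) i j d = 0 := by
            have e : mulMon8 0 0 (-0) (ψ (l1 - 0) (l2 - 0) (k1 - 0)) i j d
                = ψ l1 l2 k1 i j d := by
              rw [mulMon8_apply _ _ (by positivity) (by positivity)]
              simp
            rw [e]
            by_cases hc : k1 ≤ l1 + l2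
            · exact Hψ l1 l2 k1 ((inRV_iff' k1 k2 l1 l2 k1).mpr (by omega))
            · rw [hψconv l1 l2 k1 h1 h3 (by omega)]
              exact Hψ l1 l2 (l1 + l2) ((inRV_iff' k1 k2 l1 l2 (l1 + l2)).mpr (by omega))
          omega
        · by_cases hk : l1 + l2 - l3 = k2
          · -- use (M1)
            have hRU : inRU k1 k2 l1 l2 l3 := (inRU_iff' k1 k2 l1 l2 l3).mpr (by omega)
            have h := hM1 l1 l2 l3 hRU i j d
            have hA : φ l1 (l2 - 1) l3 i j d = 0 := by
              by_cases hc : l3 ≤ l2 - 1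
              · exact IHa (l2 - 1).toNat (by omega) l3.toNat l1 (l2 - 1) l3
                  ((inRbarU_iff' k1 k2 l1 (l2 - 1) l3).mpr (by omega)) (by omega) (by omega)
              · rw [hφconv l1 (l2 - 1) l3 h1 (by omega) (by omega)]
                have hmin : min l1 (l2 - 1) = l2 - 1 := by omega
                rw [hmin]
                exact IHa (l2 - 1).toNat (by omega) (l2 - 1).toNat l1 (l2 - 1) (l2 - 1)
                  ((inRbarU_iff' k1 k2 l1 (l2 - 1) (l2 - 1)).mpr (by omega)) (by omega) (by omega)
            have hB : mulMon8 0 l2 0 (shiftQ8 (-1) 1 (ψ l3 (k2 - l2) l1)) i j d = 0 := by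
              by_cases hc : l2 ≤ (j : ℤ)
              · rw [mulMon8_apply _ _ (by positivity) hc]
                simp only [shiftQ8]
                refine IHψ ((i : ℤ) - 0).toNat ((j : ℤ) - l2).toNat ?_ l3 (k2 - l2) l1
                  ((inRV_iff' k1 k2 l3 (k2 - l2) l1).mpr (by omega)) _
                omega
              · exact mulMon8_zero _ _ (by omega)
            omega
          · -- use (M3)
            have h := hM3 l1 l2 l3 hR (Or.inl hk) i j d
            have hA : φ l1 l2 (l3 - 1) i j d = 0 :=
              IHb (l3 - 1).toNat (by omega) l1 l2 (l3 - 1)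
                ((inRbarU_iff' k1 k2 l1 l2 (l3 - 1)).mpr (by omega)) (by omega) (by omega)
            have hB : mulMon8 l3 l3 (-l3) (ψ (l1 - l3) (l2 - l3) (k1 - l3)) i j d = 0 := by
              by_cases hc : l3 ≤ (i : ℤ) ∧ l3 ≤ (j : ℤ)
              · rw [mulMon8_apply _ _ hc.1 hc.2]
                by_cases hc2 : k1 - l3 ≤ (l1 - l3) + (l2 - l3)
                · refine IHψ ((i : ℤ) - l3).toNat ((j : ℤ) - l3).toNat ?_ (l1 - l3) (l2 - l3)
                    (k1 - l3) ((inRV_iff' k1 k2 (l1 - l3) (l2 - l3) (k1 - l3)).mpr (by omega)) _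
                  omega
                · rw [hψconv (l1 - l3) (l2 - l3) (k1 - l3) (by omega) (by omega) (by omega)]
                  refine IHψ ((i : ℤ) - l3).toNat ((j : ℤ) - l3).toNat ?_ (l1 - l3) (l2 - l3)
                    ((l1 - l3) + (l2 - l3))
                    ((inRV_iff' k1 k2 (l1 - l3) (l2 - l3) ((l1 - l3) + (l2 - l3))).mpr (by omega)) _
                  omega
              · exact mulMon8_zero _ _ hc
            omega
      intro l1 l2 l3 hR
      have hR' := (inRbarU_iff' k1 k2 l1 l2 l3).mp hR
      exact key l2.toNat l3.toNat l1 l2 l3 hR (by omega) (by omega)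
    -- a uniform lower bound for the q-supports at (i,j)
    have hbnd : ∃ D0 : ℤ, ∀ d : ℤ, d < D0 →
        (∀ l1 l2 l3, inRbarU k1 k2 l1 l2 l3 → φ l1 l2 l3 i j d = 0) ∧
        (∀ l1 l2 l3, inRV k1 k2 l1 l2 l3 → ψ l1 l2 l3 i j d = 0) := by
      have hb : ∀ t : ℤ × ℤ × ℤ, ∃ D : ℤ, ∀ d : ℤ, d < D →
          (inRbarU k1 k2 t.1 t.2.1 t.2.2 → φ t.1 t.2.1 t.2.2 i j d = 0) ∧
          (inRV k1 k2 t.1 t.2.1 t.2.2 → ψ t.1 t.2.1 t.2.2 i j d = 0) := by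
        rintro ⟨t1, t2, t3⟩
        by_cases hU : inRbarU k1 k2 t1 t2 t3 <;> by_cases hV : inRV k1 k2 t1 t2 t3
        · obtain ⟨Da, hDa⟩ := hφL t1 t2 t3 hU i j
          obtain ⟨Db, hDb⟩ := hψL t1 t2 t3 hV i j
          exact ⟨min Da Db, fun d hd =>
            ⟨fun _ => hDa d (by omega), fun _ => hDb d (by omega)⟩⟩
        · obtain ⟨Da, hDa⟩ := hφL t1 t2 t3 hU i j
          exact ⟨Da, fun d hd => ⟨fun _ => hDa d hd, fun h => absurd h hV⟩⟩
        · obtain ⟨Db, hDb⟩ := hψL t1 t2 t3 hV i j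
          exact ⟨Db, fun d hd => ⟨fun h => absurd h hU, fun _ => hDb d hd⟩⟩
        · exact ⟨0, fun d _ => ⟨fun h => absurd h hU, fun h => absurd h hV⟩⟩
      choose Df hDf using hb
      have hne : ((Finset.Icc (0:ℤ) k2) ×ˢ ((Finset.Icc (0:ℤ) k2) ×ˢ (Finset.Icc (0:ℤ) k2))).Nonempty := by
        refine ⟨(0, 0, 0), ?_⟩
        simp only [Finset.mem_product, Finset.mem_Icc]
        omega
      refine ⟨((Finset.Icc (0:ℤ) k2) ×ˢ ((Finset.Icc (0:ℤ) k2) ×ˢ (Finset.Icc (0:ℤ) k2))).inf'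
        hne Df, fun d hd => ⟨fun l1 l2 l3 hR => ?_, fun l1 l2 l3 hR => ?_⟩⟩
      · have hf := (inRbarU_iff' k1 k2 l1 l2 l3).mp hR
        have hmem : (l1, l2, l3) ∈
            ((Finset.Icc (0:ℤ) k2) ×ˢ ((Finset.Icc (0:ℤ) k2) ×ˢ (Finset.Icc (0:ℤ) k2))) := by
          simp only [Finset.mem_product, Finset.mem_Icc]
          omega
        exact (hDf (l1, l2, l3) d (lt_of_lt_of_le hd (Finset.inf'_le _ hmem))).1 hR
      · have hf := (inRV_iff' k1 k2 l1 l2 l3).mp hR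
        have hmem : (l1, l2, l3) ∈
            ((Finset.Icc (0:ℤ) k2) ×ˢ ((Finset.Icc (0:ℤ) k2) ×ˢ (Finset.Icc (0:ℤ) k2))) := by
          simp only [Finset.mem_product, Finset.mem_Icc]
          omega
        exact (hDf (l1, l2, l3) d (lt_of_lt_of_le hd (Finset.inf'_le _ hmem))).2 hR
    -- descent on the q-degree
    have descend : ∀ e : ℤ, 0 < e →
        (∀ d : ℤ, (∀ l1 l2 l3, inRbarU k1 k2 l1 l2 l3 → φ l1 l2 l3 i j (d - e) = 0) →
          ∀ l1 l2 l3, inRV k1 k2 l1 l2 l3 → ψ l1 l2 l3 i j d = 0) →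
        (∀ l1 l2 l3, inRbarU k1 k2 l1 l2 l3 → ∀ d, φ l1 l2 l3 i j d = 0) ∧
        (∀ l1 l2 l3, inRV k1 k2 l1 l2 l3 → ∀ d, ψ l1 l2 l3 i j d = 0) := by
      intro e he hstep
      obtain ⟨D0, hD0⟩ := hbnd
      have all : ∀ m : ℕ, ∀ d : ℤ, d < D0 + m →
          (∀ l1 l2 l3, inRbarU k1 k2 l1 l2 l3 → φ l1 l2 l3 i j d = 0) ∧
          (∀ l1 l2 l3, inRV k1 k2 l1 l2 l3 → ψ l1 l2 l3 i j d = 0) := by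
        intro m
        induction m with
        | zero => intro d hd; exact hD0 d (by omega)
        | succ m IHm =>
          intro d hd
          by_cases hdm : d < D0 + m
          · exact IHm d hdm
          · have hψd : ∀ l1 l2 l3, inRV k1 k2 l1 l2 l3 → ψ l1 l2 l3 i j d = 0 :=
              hstep d (fun l1 l2 l3 hh => (IHm (d - e) (by omega)).1 l1 l2 l3 hh)
            exact ⟨phiStep d hψd, hψd⟩
      constructor
      · intro l1 l2 l3 hR d
        exact (all ((d - D0).toNat + 1) d (by omega)).1 l1 l2 l3 hR
      · intro l1 l2 l3 hR d
        exact (all ((d - D0).toNat + 1) d (by omega)).2 l1 l2 l3 hR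
    rcases Nat.eq_zero_or_pos i with hi0 | hipos
    · subst hi0
      rcases Nat.eq_zero_or_pos j with hj0 | hjpos
      · -- the case (i,j) = (0,0)
        subst hj0
        have psiAll : ∀ d, ∀ l1 l2 l3, inRV k1 k2 l1 l2 l3 → ψ l1 l2 l3 0 0 d = 0 := by
          intro d
          have key : ∀ a b : ℕ, ∀ l1 l2 l3, inRV k1 k2 l1 l2 l3 → l1 ≤ (a : ℤ) → l2 ≤ (b : ℤ) →
              ψ l1 l2 l3 0 0 d = 0 := by
            intro a
            induction a using Nat.strong_induction_on with
            | _ a IHa =>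
            intro b
            induction b using Nat.strong_induction_on with
            | _ b IHb =>
            intro l1 l2 l3 hR hla hlb
            obtain ⟨c1, c2, c3, c4, c5, c6, c7, c8, c9⟩ := (inRV_iff' k1 k2 l1 l2 l3).mp hR
            have hpos := hψpos l1 l2 l3 hR 0 0 d
            by_cases hl1 : l1 = 0
            · subst hl1
              by_cases hl2 : l2 = 0
              · subst hl2
                have hl3 : l3 = 0 := by omega
                subst hl3
                exact hconst d
              · have h := hM2 0 l2 l3 hR 0 0 d
                have hB : mulMon8 0 l2 0 (shiftQ8 0 1 (φ l3 (k2 - l2) 0)) 0 0 d = 0 := by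
                  refine mulMon8_zero _ _ ?_
                  push_cast
                  omega
                have hA : ψ 0 (l2 - 1) l3 0 0 d = 0 := by
                  by_cases hc : l3 ≤ 0 + (l2 - 1)
                  · exact IHb (l2 - 1).toNat (by omega) 0 (l2 - 1) l3
                      ((inRV_iff' k1 k2 0 (l2 - 1) l3).mpr (by omega)) (by omega) (by omega)
                  · rw [hψconv 0 (l2 - 1) l3 le_rfl (by omega) (by omega)]
                    exact IHb (l2 - 1).toNat (by omega) 0 (l2 - 1) (0 + (l2 - 1))
                      ((inRV_iff' k1 k2 0 (l2 - 1) (0 + (l2 - 1))).mpr (by omega))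
                      (by omega) (by omega)
                omega
            · have h := hM4 l1 l2 l3 hR 0 0 d
              have hB : mulMon8 l1 0 0 (shiftQ8 1 0 (φ (k1 - l1) (l1 + l2) (l3 - l1))) 0 0 d = 0 := by
                refine mulMon8_zero _ _ ?_
                push_cast
                omega
              have hA : ψ (l1 - 1) l2 l3 0 0 d = 0 := by
                by_cases hc : l3 ≤ (l1 - 1) + l2
                · exact IHa (l1 - 1).toNat (by omega) l2.toNat (l1 - 1) l2 l3
                    ((inRV_iff' k1 k2 (l1 - 1) l2 l3).mpr (by omega)) (by omega) (by omega)
                · rw [hψconv (l1 - 1) l2 l3 (by omega) c3 (by omega)]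
                  exact IHa (l1 - 1).toNat (by omega) l2.toNat (l1 - 1) l2 ((l1 - 1) + l2)
                    ((inRV_iff' k1 k2 (l1 - 1) l2 ((l1 - 1) + l2)).mpr (by omega))
                    (by omega) (by omega)
              omega
          intro l1 l2 l3 hR
          have hR' := (inRV_iff' k1 k2 l1 l2 l3).mp hR
          exact key l1.toNat l2.toNat l1 l2 l3 hR (by omega) (by omega)
        exact ⟨fun l1 l2 l3 hR d => phiStep d (psiAll d) l1 l2 l3 hR,
          fun l1 l2 l3 hR d => psiAll d l1 l2 l3 hR⟩
      · -- the case i = 0, j > 0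
        refine descend (j : ℤ) (by exact_mod_cast hjpos) ?_
        intro d Hφd
        have key : ∀ a b : ℕ, ∀ l1 l2 l3, inRV k1 k2 l1 l2 l3 → l1 ≤ (a : ℤ) → l2 ≤ (b : ℤ) →
            ψ l1 l2 l3 0 j d = 0 := by
          intro a
          induction a using Nat.strong_induction_on with
          | _ a IHa =>
          intro b
          induction b using Nat.strong_induction_on with
          | _ b IHb =>
          intro l1 l2 l3 hR hla hlb
          obtain ⟨c1, c2, c3, c4, c5, c6, c7, c8, c9⟩ := (inRV_iff' k1 k2 l1 l2 l3).mp hR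
          have hpos := hψpos l1 l2 l3 hR 0 j d
          by_cases hl1 : l1 = 0
          · subst hl1
            by_cases hl2 : l2 = 0
            · subst hl2
              have hl3 : l3 = 0 := by omega
              subst hl3
              have h := hM2 0 0 0 hR 0 j d
              have hA : ψ 0 (0 - 1) 0 0 j d = 0 := by
                rw [hψneg 0 (0 - 1) 0 (Or.inr (Or.inl (by norm_num)))]; simp
              have hB : mulMon8 0 0 0 (shiftQ8 0 1 (φ 0 (k2 - 0) 0)) 0 j d = 0 := by
                rw [mulMon8_apply _ _ (by positivity) (by positivity)]
                simp only [shiftQ8]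
                have e0 : (((0:ℕ) : ℤ) - 0).toNat = (0 : ℕ) := by omega
                have ej : (((j:ℕ) : ℤ) - 0).toNat = j := by omega
                rw [e0, ej]
                have := Hφd 0 (k2 - 0) 0 ((inRbarU_iff' k1 k2 0 (k2 - 0) 0).mpr (by omega))
                convert this using 2
                push_cast
                ring
              omega
            · have h := hM2 0 l2 l3 hR 0 j d
              have hA : ψ 0 (l2 - 1) l3 0 j d = 0 := by
                by_cases hc : l3 ≤ 0 + (l2 - 1)
                · exact IHb (l2 - 1).toNat (by omega) 0 (l2 - 1) l3
                    ((inRV_iff' k1 k2 0 (l2 - 1) l3).mpr (by omega)) (by omega) (by omega)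
                · rw [hψconv 0 (l2 - 1) l3 le_rfl (by omega) (by omega)]
                  exact IHb (l2 - 1).toNat (by omega) 0 (l2 - 1) (0 + (l2 - 1))
                    ((inRV_iff' k1 k2 0 (l2 - 1) (0 + (l2 - 1))).mpr (by omega))
                    (by omega) (by omega)
              have hB : mulMon8 0 l2 0 (shiftQ8 0 1 (φ l3 (k2 - l2) 0)) 0 j d = 0 := by
                by_cases hc : l2 ≤ (j : ℤ)
                · rw [mulMon8_apply _ _ (by positivity) hc]
                  simp only [shiftQ8]
                  refine IHφ (((0:ℕ) : ℤ) - 0).toNat ((j : ℤ) - l2).toNat ?_ l3 (k2 - l2) 0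
                    ((inRbarU_iff' k1 k2 l3 (k2 - l2) 0).mpr (by omega)) _
                  omega
                · exact mulMon8_zero _ _ (by omega)
              omega
          · have h := hM4 l1 l2 l3 hR 0 j d
            have hB : mulMon8 l1 0 0 (shiftQ8 1 0 (φ (k1 - l1) (l1 + l2) (l3 - l1))) 0 j d = 0 := by
              refine mulMon8_zero _ _ ?_
              push_cast
              omega
            have hA : ψ (l1 - 1) l2 l3 0 j d = 0 := by
              by_cases hc : l3 ≤ (l1 - 1) + l2
              · exact IHa (l1 - 1).toNat (by omega) l2.toNat (l1 - 1) l2 l3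
                  ((inRV_iff' k1 k2 (l1 - 1) l2 l3).mpr (by omega)) (by omega) (by omega)
              · rw [hψconv (l1 - 1) l2 l3 (by omega) c3 (by omega)]
                exact IHa (l1 - 1).toNat (by omega) l2.toNat (l1 - 1) l2 ((l1 - 1) + l2)
                  ((inRV_iff' k1 k2 (l1 - 1) l2 ((l1 - 1) + l2)).mpr (by omega))
                  (by omega) (by omega)
            omega
        intro l1 l2 l3 hR
        have hR' := (inRV_iff' k1 k2 l1 l2 l3).mp hR
        exact key l1.toNat l2.toNat l1 l2 l3 hR (by omega) (by omega)
    · -- the case i > 0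
      refine descend (i : ℤ) (by exact_mod_cast hipos) ?_
      intro d Hφd
      have key : ∀ a : ℕ, ∀ l1 l2 l3, inRV k1 k2 l1 l2 l3 → l1 ≤ (a : ℤ) →
          ψ l1 l2 l3 i j d = 0 := by
        intro a
        induction a using Nat.strong_induction_on with
        | _ a IHa =>
        intro l1 l2 l3 hR hla
        obtain ⟨c1, c2, c3, c4, c5, c6, c7, c8, c9⟩ := (inRV_iff' k1 k2 l1 l2 l3).mp hR
        have hpos := hψpos l1 l2 l3 hR i j d
        have h := hM4 l1 l2 l3 hR i j d
        by_cases hl1 : l1 = 0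
        · subst hl1
          have hA : ψ (0 - 1) l2 l3 i j d = 0 := by
            rw [hψneg (0 - 1) l2 l3 (Or.inl (by norm_num))]; simp
          have hB : mulMon8 0 0 0 (shiftQ8 1 0 (φ (k1 - 0) (0 + l2) (l3 - 0))) i j d = 0 := by
            rw [mulMon8_apply _ _ (by positivity) (by positivity)]
            simp only [shiftQ8]
            have ei : ((i : ℤ) - 0).toNat = i := by omega
            have ej : ((j : ℤ) - 0).toNat = j := by omega
            rw [ei, ej]
            have := Hφd (k1 - 0) (0 + l2) (l3 - 0)
              ((inRbarU_iff' k1 k2 (k1 - 0) (0 + l2) (l3 - 0)).mpr (by omega))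
            convert this using 2
            ring
          omega
        · have hA : ψ (l1 - 1) l2 l3 i j d = 0 := by
            by_cases hc : l3 ≤ (l1 - 1) + l2
            · exact IHa (l1 - 1).toNat (by omega) (l1 - 1) l2 l3
                ((inRV_iff' k1 k2 (l1 - 1) l2 l3).mpr (by omega)) (by omega)
            · rw [hψconv (l1 - 1) l2 l3 (by omega) c3 (by omega)]
              exact IHa (l1 - 1).toNat (by omega) (l1 - 1) l2 ((l1 - 1) + l2)
                ((inRV_iff' k1 k2 (l1 - 1) l2 ((l1 - 1) + l2)).mpr (by omega)) (by omega)
          have hB : mulMon8 l1 0 0 (shiftQ8 1 0 (φ (k1 - l1) (l1 + l2) (l3 - l1))) i j d = 0 := by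
            by_cases hc : l1 ≤ (i : ℤ)
            · rw [mulMon8_apply _ _ hc (by positivity)]
              simp only [shiftQ8]
              refine IHφ ((i : ℤ) - l1).toNat ((j : ℤ) - 0).toNat ?_ (k1 - l1) (l1 + l2)
                (l3 - l1) ((inRbarU_iff' k1 k2 (k1 - l1) (l1 + l2) (l3 - l1)).mpr (by omega)) _
              omega
            · exact mulMon8_zero _ _ (by omega)
          omega
      intro l1 l2 l3 hR
      have hR' := (inRV_iff' k1 k2 l1 l2 l3).mp hR
      exact key l1.toNat l1 l2 l3 hR (by omega)
  constructor
  · intro l1 l2 l3 hR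
    funext i j d
    have := (main (i + j) i j rfl).1 l1 l2 l3 hR d
    simpa using this
  · intro l1 l2 l3 hR
    funext i j d
    have := (main (i + j) i j rfl).2 l1 l2 l3 hR d
    simpa using this

end
end

section
/- Suppose given series φ̄_{l1,l2,l3} ∈ S for (l1,l2,l3) ∈ R̃_U and ψ̄_{l1,l2,l3} ∈ S for (l1,l2,l3) ∈ R_V (any series with a negative index is 0), satisfying the equalities: (TRa) for (l1,l2,l3) ∈ R_U: φ̄_{l1,l2,l3}(z1,z2) = φ̄_{l1,l2−1,min(l3,l2−1)}(z1,z2) + z2^{l2}·ψ̄_{l3,k2−l2,l1}(q⁻¹z1,qz2); (TRb) for (l1,l2,l3) ∈ R_V: ψ̄_{l1,l2,l3}(z1,z2) = ψ̄_{l1,l2−1,min(l3,l1+l2−1)}(z1,z2) + z2^{l2}·φ̄_{l3,k2−l2,l1}(z1,qz2); (TRc) for (l1,l2,l3) ∈ R̃_U with l1+l2−l3 ≠ k2 or l3 = 0: φ̄_{l1,l2,l3}(z1,z2) = φ̄_{l1,l2,l3−1}(z1,z2) + (q⁻¹z1z2)^{l3}·ψ̄_{l1−l3,l2−l3,min(k1−l3,l1+l2−2l3)}(z1,z2);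 (TRd) for (l1,l2,l3) ∈ R_V: ψ̄_{l1,l2,l3}(z1,z2) = ψ̄_{l1−1,l2,min(l3,l1+l2−1)}(z1,z2) + z1^{l1}·φ̄_{k1−l1,l1+l2,l3−l1}(qz1,z2). Assume that the coefficient of z1^0 z2^0 in ψ̄_{0,0,0} (a Laurent series in q) is zero. Then all the series φ̄_{l1,l2,l3} and ψ̄_{l1,l2,l3} are identically zero. -/
/-!
STATEMENT 9: uniqueness (vanishing) for the SES-recursion equalities in the regions
`R̃_U` and `R_V`.  Series in `S` are encoded by their coefficient functions
`c : ℕ → ℕ → ℤ → ℤ` (`c i j d` = coefficient of `z1^i z2^j q^d`) with `q`-support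
bounded below for each `(i,j)`.
-/

noncomputable section

def inRtildeU (k1 k2 l1 l2 l3 : ℤ) : Prop :=
  inPU k1 k2 l1 l2 l3 ∧ k1 - 1 ≤ l1 + l2 - l3 ∧ l1 + l2 - l3 ≤ k2

private lemma periodic_zero8 (g : ℤ → ℤ) (s : ℤ) (hs : 0 < s)
    (hD : ∃ D : ℤ, ∀ d, d < D → g d = 0) (hrec : ∀ d, g d = g (d - s)) (d : ℤ) : g d = 0 := by
  obtain ⟨D, hDz⟩ := hD
  have key : ∀ n : ℕ, g d = g (d - n * s) := by
    intro n
    induction n with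
    | zero => simp
    | succ n ih =>
      rw [ih, hrec (d - n * s)]
      congr 1
      push_cast
      ring
  obtain ⟨n, hn⟩ : ∃ n : ℕ, d - n * s < D := by
    refine ⟨(d - D).toNat + 1, ?_⟩
    have h1 : (d - D : ℤ) < (((d - D).toNat + 1 : ℕ) : ℤ) := by omega
    have h2 : ((((d - D).toNat + 1 : ℕ)) : ℤ) ≤ ((((d - D).toNat + 1 : ℕ)) : ℤ) * s :=
      le_mul_of_one_le_right (Int.natCast_nonneg _) (by omega)
    linarith
  rw [key n]
  exact hDz _ hn

theorem vanishing_of_SES_equalities (k1 k2 : ℤ) (hk1 : 0 ≤ k1) (hk12 : k1 ≤ k2)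
    (φ ψ : ℤ → ℤ → ℤ → S8)
    -- convention: a series with a negative index is 0
    (hφneg : ∀ l1 l2 l3, l1 < 0 ∨ l2 < 0 ∨ l3 < 0 → φ l1 l2 l3 = 0)
    (hψneg : ∀ l1 l2 l3, l1 < 0 ∨ l2 < 0 ∨ l3 < 0 → ψ l1 l2 l3 = 0)
    -- membership in S
    (hφL : ∀ l1 l2 l3, inRtildeU k1 k2 l1 l2 l3 → IsLaurent (φ l1 l2 l3))
    (hψL : ∀ l1 l2 l3, inRV k1 k2 l1 l2 l3 → IsLaurent (ψ l1 l2 l3))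
    -- (TRa)
    (hTRa : ∀ l1 l2 l3, inRU k1 k2 l1 l2 l3 →
      φ l1 l2 l3 = φ l1 (l2 - 1) (min l3 (l2 - 1))
        + mulMon8 0 l2 0 (shiftQ8 (-1) 1 (ψ l3 (k2 - l2) l1)))
    -- (TRb)
    (hTRb : ∀ l1 l2 l3, inRV k1 k2 l1 l2 l3 →
      ψ l1 l2 l3 = ψ l1 (l2 - 1) (min l3 (l1 + l2 - 1))
        + mulMon8 0 l2 0 (shiftQ8 0 1 (φ l3 (k2 - l2) l1)))
    -- (TRc)
    (hTRc : ∀ l1 l2 l3, inRtildeU k1 k2 l1 l2 l3 → (l1 + l2 - l3 ≠ k2 ∨ l3 = 0) →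
      φ l1 l2 l3 = φ l1 l2 (l3 - 1)
        + mulMon8 l3 l3 (-l3) (ψ (l1 - l3) (l2 - l3) (min (k1 - l3) (l1 + l2 - 2 * l3))))
    -- (TRd)
    (hTRd : ∀ l1 l2 l3, inRV k1 k2 l1 l2 l3 →
      ψ l1 l2 l3 = ψ (l1 - 1) l2 (min l3 (l1 + l2 - 1))
        + mulMon8 l1 0 0 (shiftQ8 1 0 (φ (k1 - l1) (l1 + l2) (l3 - l1))))
    -- the coefficient of z1^0 z2^0 in ψ̄_{0,0,0} vanishes
    (hconst : ∀ d : ℤ, ψ 0 0 0 0 0 d = 0) :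
    (∀ l1 l2 l3, inRtildeU k1 k2 l1 l2 l3 → φ l1 l2 l3 = 0) ∧
      (∀ l1 l2 l3, inRV k1 k2 l1 l2 l3 → ψ l1 l2 l3 = 0) := by
  suffices main : ∀ n : ℕ, ∀ i j : ℕ, i + j = n →
      (∀ l1 l2 l3, inRtildeU k1 k2 l1 l2 l3 → ∀ d, φ l1 l2 l3 i j d = 0) ∧
      (∀ l1 l2 l3, inRV k1 k2 l1 l2 l3 → ∀ d, ψ l1 l2 l3 i j d = 0) by
    constructor
    · intro l1 l2 l3 h
      funext i j d
      exact (main (i + j) i j rfl).1 l1 l2 l3 h d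
    · intro l1 l2 l3 h
      funext i j d
      exact (main (i + j) i j rfl).2 l1 l2 l3 h d
  intro n
  induction n using Nat.strong_induction_on with
  | _ n IH =>
  intro i j hij
  have IHφ : ∀ i' j' : ℕ, i' + j' < i + j → ∀ l1 l2 l3, inRtildeU k1 k2 l1 l2 l3 →
      ∀ d, φ l1 l2 l3 i' j' d = 0 := by
    intro i' j' hlt l1 l2 l3 hm d
    exact (IH (i' + j') (by omega) i' j' rfl).1 l1 l2 l3 hm d
  have IHψ : ∀ i' j' : ℕ, i' + j' < i + j → ∀ l1 l2 l3, inRV k1 k2 l1 l2 l3 →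
      ∀ d, ψ l1 l2 l3 i' j' d = 0 := by
    intro i' j' hlt l1 l2 l3 hm d
    exact (IH (i' + j') (by omega) i' j' rfl).2 l1 l2 l3 hm d
  clear IH hij
  -- coefficient forms of the four relations
  have cTRa : ∀ l1 l2 l3, inRU k1 k2 l1 l2 l3 → ∀ d : ℤ,
      φ l1 l2 l3 i j d = φ l1 (l2 - 1) (min l3 (l2 - 1)) i j d +
        (if l2 ≤ (j : ℤ) then
          ψ l3 (k2 - l2) l1 i ((j : ℤ) - l2).toNat (d + (i : ℤ) - ((((j : ℤ) - l2).toNat : ℕ) : ℤ))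
        else 0) := by
    intro l1 l2 l3 h d
    have e := congrFun (congrFun (congrFun (hTRa l1 l2 l3 h) i) j) d
    simp only [Pi.add_apply, mulMon8, shiftQ8] at e
    rw [e]
    congr 1
    by_cases hc : l2 ≤ (j : ℤ)
    · rw [if_pos ⟨Int.natCast_nonneg i, hc⟩, if_pos hc,
        show (((i : ℤ) - 0).toNat) = i from by simp]
      congr 1
      omega
    · rw [if_neg (fun hh => hc hh.2), if_neg hc]
  have cTRb : ∀ l1 l2 l3, inRV k1 k2 l1 l2 l3 → ∀ d : ℤ,
      ψ l1 l2 l3 i j d = ψ l1 (l2 - 1) (min l3 (l1 + l2 - 1)) i j d +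
        (if l2 ≤ (j : ℤ) then
          φ l3 (k2 - l2) l1 i ((j : ℤ) - l2).toNat (d - ((((j : ℤ) - l2).toNat : ℕ) : ℤ))
        else 0) := by
    intro l1 l2 l3 h d
    have e := congrFun (congrFun (congrFun (hTRb l1 l2 l3 h) i) j) d
    simp only [Pi.add_apply, mulMon8, shiftQ8] at e
    rw [e]
    congr 1
    by_cases hc : l2 ≤ (j : ℤ)
    · rw [if_pos ⟨Int.natCast_nonneg i, hc⟩, if_pos hc,
        show (((i : ℤ) - 0).toNat) = i from by simp]
      congr 1
      omega
    · rw [if_neg (fun hh => hc hh.2), if_neg hc]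
  have cTRc : ∀ l1 l2 l3, inRtildeU k1 k2 l1 l2 l3 → (l1 + l2 - l3 ≠ k2 ∨ l3 = 0) → ∀ d : ℤ,
      φ l1 l2 l3 i j d = φ l1 l2 (l3 - 1) i j d +
        (if l3 ≤ (i : ℤ) ∧ l3 ≤ (j : ℤ) then
          ψ (l1 - l3) (l2 - l3) (min (k1 - l3) (l1 + l2 - 2 * l3))
            ((i : ℤ) - l3).toNat ((j : ℤ) - l3).toNat (d + l3)
        else 0) := by
    intro l1 l2 l3 h hside d
    have e := congrFun (congrFun (congrFun (hTRc l1 l2 l3 h hside) i) j) d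
    simp only [Pi.add_apply, mulMon8, shiftQ8] at e
    rw [e]
    congr 1
    by_cases hc : l3 ≤ (i : ℤ) ∧ l3 ≤ (j : ℤ)
    · rw [if_pos hc, if_pos hc]
      congr 1
      omega
    · rw [if_neg hc, if_neg hc]
  have cTRd : ∀ l1 l2 l3, inRV k1 k2 l1 l2 l3 → ∀ d : ℤ,
      ψ l1 l2 l3 i j d = ψ (l1 - 1) l2 (min l3 (l1 + l2 - 1)) i j d +
        (if l1 ≤ (i : ℤ) then
          φ (k1 - l1) (l1 + l2) (l3 - l1) ((i : ℤ) - l1).toNat j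
            (d - ((((i : ℤ) - l1).toNat : ℕ) : ℤ))
        else 0) := by
    intro l1 l2 l3 h d
    have e := congrFun (congrFun (congrFun (hTRd l1 l2 l3 h) i) j) d
    simp only [Pi.add_apply, mulMon8, shiftQ8] at e
    rw [e]
    congr 1
    by_cases hc : l1 ≤ (i : ℤ)
    · rw [if_pos ⟨hc, Int.natCast_nonneg j⟩, if_pos hc,
        show (((j : ℤ) - 0).toNat) = j from by simp]
      congr 1
      omega
    · rw [if_neg (fun hh => hc hh.1), if_neg hc]
  -- boundary identities
  have hD0 : ∀ l2 l3 : ℤ, inRV k1 k2 0 l2 l3 → ∀ d : ℤ,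
      ψ 0 l2 l3 i j d = φ k1 l2 l3 i j (d - i) := by
    intro l2 l3 h d
    have e := cTRd 0 l2 l3 h d
    rw [e, show ψ ((0:ℤ) - 1) l2 (min l3 (0 + l2 - 1)) = 0 from hψneg _ _ _ (by norm_num)]
    simp only [Pi.zero_apply, zero_add]
    rw [if_pos (Int.natCast_nonneg i)]
    norm_num
  have hC0 : ∀ e : ℤ, φ k1 0 0 i j e = ψ k1 0 k1 i j e := by
    intro e
    have hm : inRtildeU k1 k2 k1 0 0 := by simp only [inRtildeU, inPU]; omega
    have e1 := cTRc k1 0 0 hm (Or.inr rfl) e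
    rw [e1, show φ k1 0 ((0:ℤ) - 1) = 0 from hφneg _ _ _ (by norm_num)]
    simp only [Pi.zero_apply, zero_add]
    rw [if_pos ⟨Int.natCast_nonneg i, Int.natCast_nonneg j⟩]
    norm_num
  have hA0 : ∀ e : ℤ, φ k1 0 0 i j e = ψ 0 k2 k1 i j (e + i - j) := by
    intro e
    have hm : inRU k1 k2 k1 0 0 := by simp only [inRU, inPU]; omega
    have e1 := cTRa k1 0 0 hm e
    rw [e1, show φ k1 ((0:ℤ) - 1) (min 0 ((0:ℤ) - 1)) = 0 from hφneg _ _ _ (by norm_num)]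
    simp only [Pi.zero_apply, zero_add]
    rw [if_pos (Int.natCast_nonneg j)]
    norm_num
  -- descent chains at the fixed bidegree
  have descent1 : ∀ m : ℕ, (m : ℤ) ≤ k1 → ∀ e : ℤ,
      ψ (m : ℤ) 0 (m : ℤ) i j e = ψ 0 0 0 i j e := by
    intro m
    induction m with
    | zero => intro _ e; norm_num
    | succ m ih =>
      intro hm e
      push_cast at hm ⊢
      have hmem : inRV k1 k2 ((m : ℤ) + 1) 0 ((m : ℤ) + 1) := by
        simp only [inRV, inPV]; omega
      have e1 := cTRd ((m : ℤ) + 1) 0 ((m : ℤ) + 1) hmem e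
      rw [show ((m : ℤ) + 1) - 1 = (m : ℤ) from by ring,
        show min ((m : ℤ) + 1) ((m : ℤ) + 1 + 0 - 1) = (m : ℤ) from by omega] at e1
      rw [e1, ih (by omega) e]
      split_ifs with hc
      · rw [IHφ (((i : ℤ) - ((m : ℤ) + 1)).toNat) j (by omega)
          (k1 - ((m : ℤ) + 1)) ((m : ℤ) + 1 + 0) (((m : ℤ) + 1) - ((m : ℤ) + 1))
          (by simp only [inRtildeU, inPU]; omega), add_zero]
      · rw [add_zero]
  have descent2 : ∀ m : ℕ, (m : ℤ) ≤ k2 → ∀ e : ℤ,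
      ψ 0 (m : ℤ) (min k1 (m : ℤ)) i j e = ψ 0 0 0 i j e := by
    intro m
    induction m with
    | zero =>
      intro _ e
      norm_num [min_eq_right hk1]
    | succ m ih =>
      intro hm e
      push_cast at hm ⊢
      have hmem : inRV k1 k2 0 ((m : ℤ) + 1) (min k1 ((m : ℤ) + 1)) := by
        simp only [inRV, inPV]; omega
      have e1 := cTRb 0 ((m : ℤ) + 1) (min k1 ((m : ℤ) + 1)) hmem e
      rw [show ((m : ℤ) + 1) - 1 = (m : ℤ) from by ring,
        show min (min k1 ((m : ℤ) + 1)) (0 + ((m : ℤ) + 1) - 1) = min k1 (m : ℤ) from by omega] at e1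
      rw [e1, ih (by omega) e]
      split_ifs with hc
      · rw [IHφ i (((j : ℤ) - ((m : ℤ) + 1)).toNat) (by omega)
          (min k1 ((m : ℤ) + 1)) (k2 - ((m : ℤ) + 1)) 0
          (by simp only [inRtildeU, inPU]; omega), add_zero]
      · rw [add_zero]
  -- the two q-shift loops
  have hRV000 : inRV k1 k2 0 0 0 := by simp only [inRV, inPV]; omega
  have loop1 : ∀ d : ℤ, ψ 0 0 0 i j d = ψ 0 0 0 i j (d - i) := by
    intro d
    have t3 := descent1 k1.toNat (by omega) (d - i)
    rw [Int.toNat_of_nonneg hk1] at t3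
    rw [hD0 0 0 hRV000 d, hC0 (d - i), t3]
  have loop2 : ∀ d : ℤ, ψ 0 0 0 i j d = ψ 0 0 0 i j (d - j) := by
    intro d
    have t3 := descent2 k2.toNat (by omega) (d - i + i - j)
    rw [Int.toNat_of_nonneg (le_trans hk1 hk12),
      show min k1 k2 = k1 from by omega] at t3
    rw [hD0 0 0 hRV000 d, hA0 (d - i), t3, show d - (i:ℤ) + i - j = d - j from by ring]
  have hψ000 : ∀ d : ℤ, ψ 0 0 0 i j d = 0 := by
    intro d
    by_cases hi : i = 0
    · by_cases hj : j = 0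
      · subst hi; subst hj; exact hconst d
      · exact periodic_zero8 (fun d => ψ 0 0 0 i j d) j (by omega)
          (hψL 0 0 0 hRV000 i j) loop2 d
    · exact periodic_zero8 (fun d => ψ 0 0 0 i j d) i (by omega)
        (hψL 0 0 0 hRV000 i j) loop1 d
  -- all ψ vanish at this bidegree
  have ψall : ∀ m : ℕ, ∀ l1 l2 l3, inRV k1 k2 l1 l2 l3 → l1 + l2 ≤ (m : ℤ) →
      ∀ d, ψ l1 l2 l3 i j d = 0 := by
    intro m
    induction m with
    | zero =>
      intro l1 l2 l3 h hm d
      have h' := h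
      simp only [inRV, inPV] at h'
      obtain ⟨e1, e2, e3⟩ : l1 = 0 ∧ l2 = 0 ∧ l3 = 0 := by omega
      subst e1; subst e2; subst e3
      exact hψ000 d
    | succ m ih =>
      intro l1 l2 l3 h hm d
      have h' := h
      simp only [inRV, inPV] at h'
      by_cases h2 : 1 ≤ l2
      · have e := cTRb l1 l2 l3 h d
        rw [e, ih l1 (l2 - 1) (min l3 (l1 + l2 - 1))
          (by simp only [inRV, inPV]; omega) (by omega) d]
        split_ifs with hc
        · rw [IHφ i (((j : ℤ) - l2).toNat) (by omega) l3 (k2 - l2) l1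
            (by simp only [inRtildeU, inPU]; omega), zero_add]
        · rw [zero_add]
      · by_cases h1 : 1 ≤ l1
        · have e := cTRd l1 l2 l3 h d
          rw [e, ih (l1 - 1) l2 (min l3 (l1 + l2 - 1))
            (by simp only [inRV, inPV]; omega) (by omega) d]
          split_ifs with hc
          · rw [IHφ (((i : ℤ) - l1).toNat) j (by omega) (k1 - l1) (l1 + l2) (l3 - l1)
              (by simp only [inRtildeU, inPU]; omega), zero_add]
          · rw [zero_add]
        · obtain ⟨e1, e2, e3⟩ : l1 = 0 ∧ l2 = 0 ∧ l3 = 0 := by omega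
          subst e1; subst e2; subst e3
          exact hψ000 d
  have ψfin : ∀ l1 l2 l3, inRV k1 k2 l1 l2 l3 → ∀ d, ψ l1 l2 l3 i j d = 0 := by
    intro l1 l2 l3 h d
    exact ψall (l1 + l2).toNat l1 l2 l3 h (by omega) d
  -- all φ vanish at this bidegree
  have φ0 : ∀ l1 l2, inRtildeU k1 k2 l1 l2 0 → ∀ d, φ l1 l2 0 i j d = 0 := by
    intro l1 l2 h d
    have h' := h
    simp only [inRtildeU, inPU] at h'
    have e := cTRc l1 l2 0 h (Or.inr rfl) d
    rw [e, show φ l1 l2 ((0:ℤ) - 1) = 0 from hφneg _ _ _ (by norm_num)]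
    simp only [Pi.zero_apply, zero_add]
    rw [if_pos ⟨Int.natCast_nonneg i, Int.natCast_nonneg j⟩]
    norm_num
    exact ψfin _ _ _ (by simp only [inRV, inPV]; omega) _
  have φall : ∀ m : ℕ, ∀ l1 l2 l3, inRtildeU k1 k2 l1 l2 l3 → l2 + l3 ≤ (m : ℤ) →
      ∀ d, φ l1 l2 l3 i j d = 0 := by
    intro m
    induction m with
    | zero =>
      intro l1 l2 l3 h hm d
      have h' := h
      simp only [inRtildeU, inPU] at h'
      obtain ⟨e2, e3⟩ : l2 = 0 ∧ l3 = 0 := by omega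
      subst e2; subst e3
      exact φ0 l1 0 h d
    | succ m ih =>
      intro l1 l2 l3 h hm d
      have h' := h
      simp only [inRtildeU, inPU] at h'
      by_cases h3 : l3 = 0
      · subst h3; exact φ0 l1 l2 h d
      · by_cases hk : l1 + l2 - l3 = k2
        · have hRU : inRU k1 k2 l1 l2 l3 := by simp only [inRU, inPU]; omega
          have e := cTRa l1 l2 l3 hRU d
          rw [e, ih l1 (l2 - 1) (min l3 (l2 - 1))
            (by simp only [inRtildeU, inPU]; omega) (by omega) d]
          split_ifs with hc
          · rw [IHψ i (((j : ℤ) - l2).toNat) (by omega) l3 (k2 - l2) l1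
              (by simp only [inRV, inPV]; omega), zero_add]
          · rw [zero_add]
        · have e := cTRc l1 l2 l3 h (Or.inl hk) d
          rw [e, ih l1 l2 (l3 - 1)
            (by simp only [inRtildeU, inPU]; omega) (by omega) d]
          split_ifs with hc
          · rw [IHψ (((i : ℤ) - l3).toNat) (((j : ℤ) - l3).toNat) (by omega)
              (l1 - l3) (l2 - l3) (min (k1 - l3) (l1 + l2 - 2 * l3))
              (by simp only [inRV, inPV]; omega), zero_add]
          · rw [zero_add]
  have φfin : ∀ l1 l2 l3, inRtildeU k1 k2 l1 l2 l3 → ∀ d, φ l1 l2 l3 i j d = 0 := by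
    intro l1 l2 l3 h d
    exact φall (l2 + l3).toNat l1 l2 l3 h (by omega) d
  exact ⟨φfin, ψfin⟩

end
end

section
/- Fix an integer k ≥ 0. Suppose given series φ̄_{l1,l2} ∈ S for integers 0 ≤ l1,l2 ≤ k with l1+l2 ≥ k (standing for φ̄^{k,k}_{l1,l2,l1+l2−k}), and ψ̄_{l1,l2} ∈ S for integers l1,l2 ≥ 0 with l1+l2 ≤ k (standing for ψ̄^{k,k}_{l1,l2,l1+l2}); any φ̄ or ψ̄ whose indices fall outside these ranges (in particular with a negative index) is 0. Assume the equalities: (i) for l1,l2 ≥ 0 with l1+l2 ≤ k: ψ̄_{l1,l2}(z1,z2) = ψ̄_{l1,l2−1}(z1,z2) + z2^{l2}·φ̄_{l1+l2,k−l2}(z1,qz2); (ii) for l1,l2 ≥ 0 with l1+l2 ≤ k: ψ̄_{l1,l2}(z1,z2) = ψ̄_{l1−1,l2}(z1,z2) + z1^{l1}·φ̄_{k−l1,l1+l2}(qz1,z2); (iii) for 0 ≤ l1,l2 ≤ k with l1+l2 ≥ k: φ̄_{l1,l2}(z1,z2) = φ̄_{l1,l2−1}(z1,z2) + z2^{l2}·ψ̄_{l1+l2−k,k−l2}(q⁻¹z1,qz2)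 + (q⁻¹z1z2)^{l1+l2−k}·ψ̄_{k−l2,k−l1−1}(z1,z2) (where φ̄_{l1,l2−1} is 0 if l1+l2−1 < k). Assume further that the coefficient of z1^0 z2^0 in ψ̄_{0,0} (a Laurent series in q) is zero. Then all the series φ̄_{l1,l2} and ψ̄_{l1,l2} are identically zero. -/
/-!
STATEMENT 10: uniqueness (vanishing) for the `k1 = k2 = k` recursion with the
3-term relation.  Series in `S` are encoded by coefficient functions
`c : ℕ → ℕ → ℤ → ℤ` (`c i j d` = coefficient of `z1^i z2^j q^d`) with `q`-support
bounded below for each `(i,j)`.  Here `φ l1 l2` stands for `φ̄^{k,k}_{l1,l2,l1+l2-k}`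
(defined for `0 ≤ l1,l2 ≤ k`, `l1+l2 ≥ k`) and `ψ l1 l2` for `ψ̄^{k,k}_{l1,l2,l1+l2}`
(defined for `l1,l2 ≥ 0`, `l1+l2 ≤ k`); out-of-range series are `0`.
-/

noncomputable section

lemma L1aux (l2 : ℤ) (f : S8) (i j : ℕ) (d : ℤ) :
    mulMon8 0 l2 0 (shiftQ8 0 1 f) i j d =
      if l2 ≤ (j:ℤ) then f i ((j:ℤ)-l2).toNat (d - ((j:ℤ)-l2)) else 0 := by
  unfold mulMon8 shiftQ8
  by_cases h : l2 ≤ (j:ℤ)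
  · rw [if_pos ⟨by omega, h⟩, if_pos h]
    rw [Int.toNat_of_nonneg (by omega : (0:ℤ) ≤ (j:ℤ)-l2)]
    congr 1
    omega
  · rw [if_neg (by tauto), if_neg h]

lemma L2aux (p : ℤ) (f : S8) (i j : ℕ) (d : ℤ) :
    mulMon8 p 0 0 (shiftQ8 1 0 f) i j d =
      if p ≤ (i:ℤ) then f ((i:ℤ)-p).toNat j (d - ((i:ℤ)-p)) else 0 := by
  unfold mulMon8 shiftQ8
  by_cases h : p ≤ (i:ℤ)
  · rw [if_pos ⟨h, by omega⟩, if_pos h]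
    rw [Int.toNat_of_nonneg (by omega : (0:ℤ) ≤ (i:ℤ)-p)]
    congr 1
    omega
  · rw [if_neg (by tauto), if_neg h]

lemma L3aux (l2 : ℤ) (f : S8) (i j : ℕ) (d : ℤ) :
    mulMon8 0 l2 0 (shiftQ8 (-1) 1 f) i j d =
      if l2 ≤ (j:ℤ) then f i ((j:ℤ)-l2).toNat (d + i - ((j:ℤ)-l2)) else 0 := by
  unfold mulMon8 shiftQ8
  by_cases h : l2 ≤ (j:ℤ)
  · rw [if_pos ⟨by omega, h⟩, if_pos h]
    rw [Int.toNat_of_nonneg (by omega : (0:ℤ) ≤ (j:ℤ)-l2)]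
    congr 1
    omega
  · rw [if_neg (by tauto), if_neg h]

lemma L4aux (m : ℤ) (f : S8) (i j : ℕ) (d : ℤ) :
    mulMon8 m m (-m) f i j d =
      if m ≤ (i:ℤ) ∧ m ≤ (j:ℤ) then f ((i:ℤ)-m).toNat ((j:ℤ)-m).toNat (d + m) else 0 := by
  unfold mulMon8
  congr 1
  rw [sub_neg_eq_add]

lemma per_zero (u : ℤ → ℤ) (t : ℤ) (ht : 0 < t)
    (hD : ∃ D : ℤ, ∀ d, d < D → u d = 0)
    (hper : ∀ d, u d = u (d - t)) : ∀ d, u d = 0 := by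
  obtain ⟨D, hD⟩ := hD
  have key : ∀ n : ℕ, ∀ d, u d = u (d - n * t) := by
    intro n
    induction n with
    | zero => simp
    | succ m ih =>
      intro d
      rw [ih d, hper (d - m*t)]
      congr 1
      push_cast
      ring
  intro d
  obtain ⟨n, hn⟩ : ∃ n : ℕ, d - n * t < D := by
    refine ⟨(d - D).toNat + 1, ?_⟩
    have h1 : (((d - D).toNat + 1 : ℕ) : ℤ) ≤ ((d - D).toNat + 1 : ℕ) * t := by
      nlinarith [Int.natCast_nonneg ((d - D).toNat + 1)]
    omega
  rw [key n d]; exact hD _ hn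

theorem vanishing_k1_eq_k2 (k : ℤ) (hk : 0 ≤ k)
    (φ ψ : ℤ → ℤ → S8)
    -- out-of-range (in particular negative-index) series are 0
    (hφ0 : ∀ l1 l2, ¬(0 ≤ l1 ∧ l1 ≤ k ∧ 0 ≤ l2 ∧ l2 ≤ k ∧ k ≤ l1 + l2) → φ l1 l2 = 0)
    (hψ0 : ∀ l1 l2, ¬(0 ≤ l1 ∧ 0 ≤ l2 ∧ l1 + l2 ≤ k) → ψ l1 l2 = 0)
    -- membership in S
    (hφL : ∀ l1 l2, IsLaurent (φ l1 l2))
    (hψL : ∀ l1 l2, IsLaurent (ψ l1 l2))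
    -- (i)
    (hi : ∀ l1 l2, 0 ≤ l1 → 0 ≤ l2 → l1 + l2 ≤ k →
      ψ l1 l2 = ψ l1 (l2 - 1) + mulMon8 0 l2 0 (shiftQ8 0 1 (φ (l1 + l2) (k - l2))))
    -- (ii)
    (hii : ∀ l1 l2, 0 ≤ l1 → 0 ≤ l2 → l1 + l2 ≤ k →
      ψ l1 l2 = ψ (l1 - 1) l2 + mulMon8 l1 0 0 (shiftQ8 1 0 (φ (k - l1) (l1 + l2))))
    -- (iii)
    (hiii : ∀ l1 l2, 0 ≤ l1 → l1 ≤ k → 0 ≤ l2 → l2 ≤ k → k ≤ l1 + l2 →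
      φ l1 l2 = φ l1 (l2 - 1)
        + mulMon8 0 l2 0 (shiftQ8 (-1) 1 (ψ (l1 + l2 - k) (k - l2)))
        + mulMon8 (l1 + l2 - k) (l1 + l2 - k) (-(l1 + l2 - k)) (ψ (k - l2) (k - l1 - 1)))
    -- the coefficient of z1^0 z2^0 in ψ̄_{0,0} vanishes
    (hconst : ∀ d : ℤ, ψ 0 0 0 0 d = 0) :
    (∀ l1 l2, φ l1 l2 = 0) ∧ (∀ l1 l2, ψ l1 l2 = 0) := by
  have key : ∀ j i : ℕ, ∀ l1 l2 d : ℤ, ψ l1 l2 i j d = 0 ∧ φ l1 l2 i j d = 0 := by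
    intro j
    induction j using Nat.strong_induction_on with
    | _ j IHj =>
    intro i
    induction i using Nat.strong_induction_on with
    | _ i IHi =>
    -- Step 1 : ψ l1 l2 i j d = φ k l2 i j (d - i)  (telescoping (ii) in l1)
    have S1 : ∀ l1 : ℤ, 0 ≤ l1 → ∀ l2 : ℤ, 0 ≤ l2 → l1 + l2 ≤ k → ∀ d : ℤ,
        ψ l1 l2 i j d = φ k l2 i j (d - (i:ℤ)) := by
      refine Int.le_induction ?_ ?_
      · intro l2 hl2 hs d
        have h := congrFun (congrFun (congrFun (hii 0 l2 le_rfl hl2 hs) i) j) d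
        simp only [Pi.add_apply] at h
        rw [h, hψ0 (0-1) l2 (by omega), L2aux]
        simp only [Pi.zero_apply, zero_add]
        rw [if_pos (by omega : (0:ℤ) ≤ (i:ℤ))]
        rw [show ((i:ℤ) - 0).toNat = i from by omega]
        rw [show k - 0 = k from by ring]
        congr 1 <;> omega
      · intro l1 hl1 ih
        intro l2 hl2 hs d
        have h := congrFun (congrFun (congrFun (hii (l1+1) l2 (by omega) hl2 hs) i) j) d
        simp only [Pi.add_apply] at h
        rw [h, L2aux]
        have hz : (if l1 + 1 ≤ (i:ℤ) then
            φ (k-(l1+1)) (l1+1+l2) ((i:ℤ)-(l1+1)).toNat j (d - ((i:ℤ)-(l1+1))) else 0) = 0 := by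
          split_ifs with hc
          · exact (IHi (((i:ℤ)-(l1+1)).toNat) (by omega) _ _ _).2
          · rfl
        rw [hz, add_zero, show l1 + 1 - 1 = l1 from by ring]
        exact ih l2 hl2 (by omega) d
    -- Step 2 : φ k l2 i j d = ψ 0 k i j (d + i - j)  (telescoping (iii) at l1 = k)
    have S2 : ∀ l2 : ℤ, 0 ≤ l2 → l2 ≤ k → ∀ d : ℤ,
        φ k l2 i j d = ψ 0 k i j (d + (i:ℤ) - (j:ℤ)) := by
      refine Int.le_induction ?_ ?_
      · intro _ d
        have h := congrFun (congrFun (congrFun (hiii k 0 hk le_rfl le_rfl hk (by omega)) i) j) d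
        simp only [Pi.add_apply] at h
        rw [h]
        simp only [add_zero, sub_self, sub_zero, zero_sub, neg_zero]
        rw [hφ0 k (-1) (by omega), hψ0 k (-1) (by omega), L3aux]
        simp only [Pi.zero_apply, zero_add]
        rw [if_pos (by omega : (0:ℤ) ≤ (j:ℤ))]
        rw [show ((j:ℤ) - 0).toNat = j from by omega]
        have hm : mulMon8 0 0 0 (0 : S8) i j d = 0 := by
          simp [mulMon8]
        rw [hm, add_zero]
        congr 1 <;> omega
      · intro l2 hl2 ih
        intro hle d
        have h := congrFun (congrFun (congrFun
          (hiii k (l2+1) hk le_rfl (by omega) hle (by omega)) i) j) d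
        simp only [Pi.add_apply] at h
        rw [h]
        have h2 : mulMon8 0 (l2+1) 0 (shiftQ8 (-1) 1 (ψ (k+(l2+1)-k) (k-(l2+1)))) i j d = 0 := by
          rw [L3aux]
          split_ifs with hc
          · exact (IHj (((j:ℤ)-(l2+1)).toNat) (by omega) i _ _ _).1
          · rfl
        have h3 : mulMon8 (k+(l2+1)-k) (k+(l2+1)-k) (-(k+(l2+1)-k))
            (ψ (k-(l2+1)) (k-k-1)) i j d = 0 := by
          rw [hψ0 (k-(l2+1)) (k-k-1) (by omega)]
          simp [mulMon8]
        rw [h2, h3, add_zero, add_zero, show l2 + 1 - 1 = l2 from by ring]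
        exact ih (by omega) d
    -- Step 3 : ψ l1 l2 i j d = φ l1 k i j (d - j)  (telescoping (i) in l2)
    have S3 : ∀ l1 : ℤ, 0 ≤ l1 → ∀ l2 : ℤ, 0 ≤ l2 → l1 + l2 ≤ k → ∀ d : ℤ,
        ψ l1 l2 i j d = φ l1 k i j (d - (j:ℤ)) := by
      intro l1 hl1
      refine Int.le_induction ?_ ?_
      · intro hs d
        have h := congrFun (congrFun (congrFun (hi l1 0 hl1 le_rfl hs) i) j) d
        simp only [Pi.add_apply] at h
        rw [h]
        simp only [add_zero, sub_zero, zero_sub]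
        rw [hψ0 l1 (-1) (by omega), L1aux]
        simp only [Pi.zero_apply, zero_add]
        rw [if_pos (by omega : (0:ℤ) ≤ (j:ℤ))]
        rw [show ((j:ℤ) - 0).toNat = j from by omega]
        congr 1 <;> omega
      · intro l2 hl2 ih
        intro hs d
        have h := congrFun (congrFun (congrFun (hi l1 (l2+1) hl1 (by omega) hs) i) j) d
        simp only [Pi.add_apply] at h
        rw [h]
        have h2 : mulMon8 0 (l2+1) 0 (shiftQ8 0 1 (φ (l1+(l2+1)) (k-(l2+1)))) i j d = 0 := by
          rw [L1aux]
          split_ifs with hc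
          · exact (IHj (((j:ℤ)-(l2+1)).toNat) (by omega) i _ _ _).2
          · rfl
        rw [h2, add_zero, show l2 + 1 - 1 = l2 from by ring]
        exact ih (by omega) d
    -- (★) every ψ at (i,j) is a shift of ψ 0 k
    have star : ∀ l1 l2 : ℤ, 0 ≤ l1 → 0 ≤ l2 → l1 + l2 ≤ k → ∀ d : ℤ,
        ψ l1 l2 i j d = ψ 0 k i j (d - (j:ℤ)) := by
      intro l1 l2 h1 h2 h3 d
      rw [S1 l1 h1 l2 h2 h3 d, S2 l2 h2 (by omega) (d - (i:ℤ))]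
      congr 1
      omega
    have per_j : ∀ d : ℤ, ψ 0 k i j d = ψ 0 k i j (d - (j:ℤ)) :=
      fun d => star 0 k le_rfl hk (by omega) d
    have chain2 : ∀ d : ℤ, ψ 0 k i j d = ψ 0 k i j (d + (i:ℤ) - (j:ℤ)) := by
      intro d
      have a1 : ψ k 0 i j (d + (j:ℤ)) = ψ 0 k i j (d + (j:ℤ) - (j:ℤ)) :=
        star k 0 hk le_rfl (by omega) _
      have a2 : ψ k 0 i j (d + (j:ℤ)) = φ k k i j (d + (j:ℤ) - (j:ℤ)) :=
        S3 k hk 0 le_rfl (by omega) _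
      rw [S2 k hk le_rfl] at a2
      rw [show d + (j:ℤ) - (j:ℤ) = d from by ring] at a1 a2
      rw [← a1]
      exact a2
    have hzero : ∀ d : ℤ, ψ 0 k i j d = 0 := by
      rcases Nat.eq_zero_or_pos j with hj | hj
      · rcases Nat.eq_zero_or_pos i with hi0 | hi0
        · subst hj; subst hi0
          intro d
          have h1 := star 0 0 le_rfl le_rfl (by omega) d
          rw [hconst d] at h1
          rw [show d - ((0:ℕ):ℤ) = d from by push_cast; ring] at h1
          exact h1.symm
        · subst hj
          refine per_zero _ (i:ℤ) (by exact_mod_cast hi0) (hψL 0 k i 0) ?_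
          intro d
          have h2 := chain2 (d - (i:ℤ))
          rw [show d - (i:ℤ) + (i:ℤ) - ((0:ℕ):ℤ) = d from by push_cast; ring] at h2
          exact h2.symm
      · exact per_zero _ (j:ℤ) (by exact_mod_cast hj) (hψL 0 k i j) per_j
    have psz : ∀ l1 l2 d : ℤ, ψ l1 l2 i j d = 0 := by
      intro l1 l2 d
      by_cases h : 0 ≤ l1 ∧ 0 ≤ l2 ∧ l1 + l2 ≤ k
      · rw [star l1 l2 h.1 h.2.1 h.2.2 d]; exact hzero _
      · rw [hψ0 l1 l2 h]; rfl
    -- the two ψ-terms of (iii) vanish at the point (i,j)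
    have T2h : ∀ l2 a b d : ℤ, 0 ≤ l2 →
        mulMon8 0 l2 0 (shiftQ8 (-1) 1 (ψ a b)) i j d = 0 := by
      intro l2 a b d hl2
      rw [L3aux]
      split_ifs with hc
      · by_cases hj' : ((j:ℤ) - l2).toNat = j
        · rw [hj']; exact psz _ _ _
        · exact (IHj (((j:ℤ)-l2).toNat) (by omega) i _ _ _).1
      · rfl
    have T3h : ∀ m a b d : ℤ, 0 ≤ m →
        mulMon8 m m (-m) (ψ a b) i j d = 0 := by
      intro m a b d hm
      rw [L4aux]
      split_ifs with hc
      · by_cases hm0 : m = 0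
        · subst hm0
          rw [show ((i:ℤ) - 0).toNat = i from by omega,
              show ((j:ℤ) - 0).toNat = j from by omega]
          exact psz _ _ _
        · exact (IHj (((j:ℤ)-m).toNat) (by omega) (((i:ℤ)-m).toNat) _ _ _).1
      · rfl
    -- φ vanishes at (i,j), by telescoping (iii)
    have phz : ∀ l2 : ℤ, 0 ≤ l2 → ∀ l1 d : ℤ, φ l1 l2 i j d = 0 := by
      refine Int.le_induction ?_ ?_
      · intro l1 d
        by_cases h : 0 ≤ l1 ∧ l1 ≤ k ∧ k ≤ l1 + 0
        · have h3 := congrFun (congrFun (congrFun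
            (hiii l1 0 h.1 h.2.1 le_rfl hk h.2.2) i) j) d
          simp only [Pi.add_apply] at h3
          rw [h3, hφ0 l1 (0-1) (by omega), T2h 0 (l1+0-k) (k-0) d le_rfl,
              T3h (l1+0-k) (k-0) (k-l1-1) d (by omega)]
          simp
        · rw [hφ0 l1 0 (by omega)]; rfl
      · intro l2 hl2 ih
        intro l1 d
        by_cases h : 0 ≤ l1 ∧ l1 ≤ k ∧ l2 + 1 ≤ k ∧ k ≤ l1 + (l2+1)
        · have h3 := congrFun (congrFun (congrFun
            (hiii l1 (l2+1) h.1 h.2.1 (by omega) h.2.2.1 h.2.2.2) i) j) d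
          simp only [Pi.add_apply] at h3
          rw [h3, T2h (l2+1) (l1+(l2+1)-k) (k-(l2+1)) d (by omega),
              T3h (l1+(l2+1)-k) (k-(l2+1)) (k-l1-1) d (by omega),
              add_zero, add_zero, show l2 + 1 - 1 = l2 from by ring]
          exact ih l1 d
        · rw [hφ0 l1 (l2+1) (by omega)]; rfl
    intro l1 l2 d
    refine ⟨psz l1 l2 d, ?_⟩
    by_cases h2 : 0 ≤ l2
    · exact phz l2 h2 l1 d
    · rw [hφ0 l1 l2 (by omega)]; rfl
  constructor
  · intro l1 l2; funext i j d; exact (key j i l1 l2 d).2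
  · intro l1 l2; funext i j d; exact (key j i l1 l2 d).1


end
end

section
/- Let V be a vector space over a field of characteristic zero, and let x, y be linear endomorphisms of V such that z := y∘x − x∘y commutes with both x and y. Let l1, l2 ≥ 0 be integers and let w ∈ V satisfy x^{l1+1} w = 0 and y^{l2+1} w = 0. Then x^α z^β w = 0 for all integers α, β ≥ 0 with α + β = l1 + l2 + 1. -/
/-!
STATEMENT 11: if `x, y` are endomorphisms of a vector space over a field of
characteristic zero whose commutator `z = y∘x - x∘y` commutes with both `x` and `y`,
and `x^{l1+1} w = 0`, `y^{l2+1} w = 0`, then `x^α z^β w = 0` whenever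
`α + β = l1 + l2 + 1`.
-/

section NCVHelpers


variable {K V : Type*} [Field K] [CharZero K] [AddCommGroup V] [Module K V]

/-- `[y, x^{n+1}] = (n+1) x^n z` when `z = yx - xy` commutes with `x`. -/
lemma ncv_key (x y z : Module.End K V) (hz : z = y * x - x * y) (hzx : z * x = x * z) :
    ∀ n : ℕ, y * x ^ (n + 1) = x ^ (n + 1) * y + (n + 1) • (x ^ n * z) := by
  intro n
  induction n with
  | zero =>
    simp only [zero_add, pow_one, pow_zero, one_mul, one_smul, hz]
    abel
  | succ n ih =>
    have h1 : y * x = x * y + z := by rw [hz]; abel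
    have h2 : (n + 2) • (x ^ (n + 1) * z) = (n + 1) • (x ^ (n + 1) * z) + x ^ (n + 1) * z :=
      succ_nsmul _ _
    calc y * x ^ (n + 2) = (y * x ^ (n + 1)) * x := by rw [pow_succ, ← mul_assoc]
      _ = (x ^ (n + 1) * y + (n + 1) • (x ^ n * z)) * x := by rw [ih]
      _ = x ^ (n + 1) * (y * x) + (n + 1) • (x ^ n * (z * x)) := by
          rw [add_mul, smul_mul_assoc, mul_assoc, mul_assoc]
      _ = x ^ (n + 1) * (x * y) + x ^ (n + 1) * z + (n + 1) • (x ^ (n + 1) * z) := by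
          rw [h1, hzx, ← mul_assoc, ← pow_succ, mul_add]
      _ = x ^ (n + 2) * y + (n + 2) • (x ^ (n + 1) * z) := by
          rw [← mul_assoc, ← pow_succ, h2]; abel


set_option linter.unusedSectionVars false

/-- Inner induction on `β`. -/
lemma ncv_inner (x y z : Module.End K V) (hz : z = y * x - x * y)
    (hzx : z * x = x * z) (hzy : z * y = y * z) (L : ℕ) (w : V)
    (hxw : (x ^ L) w = 0)
    (hY : ∀ α β : ℕ, α + β = L → ((x ^ α) * (z ^ β)) (y w) = 0) :
    ∀ α β : ℕ, α + β = L → ((x ^ α) * (z ^ β)) w = 0 := by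
  intro α β
  induction β generalizing α with
  | zero =>
    intro h
    simp only [Nat.add_zero] at h
    subst h
    simp [hxw]
  | succ β ih =>
    intro h
    have hsum : (α + 1) + β = L := by omega
    have hyzb : y * z ^ β = z ^ β * y := (Commute.pow_right (Commute.symm hzy) β).eq
    have E : (α + 1) • (x ^ α * z ^ (β + 1))
        = y * (x ^ (α + 1) * z ^ β) - (x ^ (α + 1) * z ^ β) * y := by
      have e1 := congrArg (· * z ^ β) (ncv_key x y z hz hzx α)
      simp only [add_mul, smul_mul_assoc, mul_assoc] at e1
      rw [hyzb, ← pow_succ'] at e1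
      rw [mul_assoc, e1]
      abel
    have h1 := ih (α + 1) hsum
    have h2 := hY (α + 1) β hsum
    have happ := LinearMap.congr_fun E w
    simp only [Module.End.mul_apply, LinearMap.smul_apply, LinearMap.sub_apply] at happ h1 h2 ⊢
    rw [h1, h2, map_zero, sub_zero] at happ
    have hK : ((α + 1 : ℕ) : K) • ((x ^ α * z ^ (β + 1)) w) = 0 := by
      rw [Nat.cast_smul_eq_nsmul]; exact happ
    exact (smul_eq_zero.mp hK).resolve_left
      (Nat.cast_ne_zero.mpr (Nat.succ_ne_zero α))

end NCVHelpers

theorem nilpotent_commutator_vanishing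
    {K V : Type*} [Field K] [CharZero K] [AddCommGroup V] [Module K V]
    (x y : Module.End K V) (z : Module.End K V) (hz : z = y * x - x * y)
    (hzx : z * x = x * z) (hzy : z * y = y * z)
    (l1 l2 : ℕ) (w : V)
    (hxw : (x ^ (l1 + 1)) w = 0) (hyw : (y ^ (l2 + 1)) w = 0) :
    ∀ α β : ℕ, α + β = l1 + l2 + 1 → ((x ^ α) * (z ^ β)) w = 0 := by
  induction l2 generalizing l1 w with
  | zero =>
    apply ncv_inner x y z hz hzx hzy (l1 + 0 + 1) w
    · simpa using hxw
    · intro α β hab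
      have : y w = 0 := by simpa using hyw
      simp [this]
  | succ l2 ih =>
    apply ncv_inner x y z hz hzx hzy (l1 + (l2 + 1) + 1) w
    · -- x ^ (l1 + l2 + 2) w = 0
      have : x ^ (l1 + (l2 + 1) + 1) = x ^ (l2 + 1) * x ^ (l1 + 1) := by
        rw [← pow_add]; ring_nf
      rw [this, Module.End.mul_apply, hxw, map_zero]
    · -- use ih with l1' = l1 + 1, w' = y w
      have hx' : (x ^ (l1 + 1 + 1)) (y w) = 0 := by
        have hkey := ncv_key x y z hz hzx (l1 + 1)
        have e : x ^ (l1 + 2) * y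
            = y * x ^ (l1 + 2) - (l1 + 2) • (x ^ (l1 + 1) * z) := by
          rw [hkey]; abel
        have := LinearMap.congr_fun e w
        simp only [Module.End.mul_apply, LinearMap.sub_apply, LinearMap.smul_apply] at this
        rw [this]
        have hxz : (x ^ (l1 + 1) * z) = z * x ^ (l1 + 1) :=
          (Commute.pow_left (Commute.symm hzx) (l1 + 1)).eq
        have h2 : (x ^ (l1 + 2)) w = 0 := by
          have : x ^ (l1 + 2) = x * x ^ (l1 + 1) := (pow_succ' x (l1 + 1))
          rw [this, Module.End.mul_apply, hxw, map_zero]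
        rw [h2, map_zero]
        have h3 : (x ^ (l1 + 1)) (z w) = z ((x ^ (l1 + 1)) w) := by
          simpa [Module.End.mul_apply] using LinearMap.congr_fun hxz w
        rw [h3, hxw]
        simp
      have hy' : (y ^ (l2 + 1)) (y w) = 0 := by
        have : y ^ (l2 + 1 + 1) = y ^ (l2 + 1) * y := pow_succ y (l2 + 1)
        rw [← Module.End.mul_apply, ← this]; exact hyw
      intro α β hab
      exact ih (l1 + 1) (y w) hx' hy' α β (by omega)
end

section
/- For all integers i ≥ 0 and m ≥ n ≥ 1 one has, in F: (1 − z2 q^{n+2i}) · d₀(m,n; q^{−i}z1, q^{2i}z2) = (1 − q^{n}) · d₅(m,m−n; q^{i}z1z2, q^{−2i}z2⁻¹). Here dₛ(m,n; u,v) denotes the element obtained from the defining formula of dₛ(m,n;z1,z2) by substituting z1 ↦ u and z2 ↦ v (note that in each case the arguments of the two infinite Pochhammer products have zero constant term, so both sides are well-defined elements of F). -/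
noncomputable section

open scoped BigOperators

/-- A formal series `Σ c(a,b,d) z1^a z2^b q^d`, encoded by its coefficient function. -/
abbrev Ser : Type := ℤ → ℤ → ℤ → ℚ

namespace Ser

/-- The series `1`. -/
def one : Ser := fun a b d => if a = 0 ∧ b = 0 ∧ d = 0 then 1 else 0

/-- The monomial `c · z1^p z2^r q^s`. -/
def mon (p r s : ℤ) (c : ℚ) : Ser := fun a b d => if a = p ∧ b = r ∧ d = s then c else 0

/-- Product of two series (coefficientwise convolution). -/
def mul (f g : Ser) : Ser := fun a b d =>
  ∑ᶠ x : ℤ × ℤ × ℤ, f x.1 x.2.1 x.2.2 * g (a - x.1) (b - x.2.1) (d - x.2.2)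

end Ser

infixl:70 " ⊛ₛ " => Ser.mul

namespace Ser

/-- `prodR g n = g 0 ⊛ₛ g 1 ⊛ₛ ⋯ ⊛ₛ g (n-1)`. -/
def prodR (g : ℕ → Ser) : ℕ → Ser
  | 0 => one
  | n + 1 => prodR g n ⊛ₛ g n

/-- Monomial attached to a triple `v = (v₁,v₂,v₃)`, meaning `z1^{v₁} z2^{v₂} q^{v₃}`. -/
def mon3 (v : ℤ × ℤ × ℤ) (c : ℚ) : Ser := mon v.1 v.2.1 v.2.2 c

/-- The triple of `q^c`. -/
def qe (c : ℤ) : ℤ × ℤ × ℤ := (0, 0, c)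

/-- `(x)_n = ∏_{i<n} (1 - x q^i)` where `x = z1^{v₁} z2^{v₂} q^{v₃}`. -/
def poch3 (v : ℤ × ℤ × ℤ) (n : ℕ) : Ser := prodR (fun i => one - mon3 (v + qe (i : ℤ)) 1) n

/-- `(x)_∞ = ∏_{i≥0} (1 - x q^i) = Σ_{T ⊆ ℕ finite} (-1)^{|T|} x^{|T|} q^{Σ T}`. -/
def pochInf3 (v : ℤ × ℤ × ℤ) : Ser := fun a b d =>
  ∑ᶠ T : Finset ℕ,
    if (T.card : ℤ) * v.1 = a ∧ (T.card : ℤ) * v.2.1 = b ∧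
        (T.card : ℤ) * v.2.2 + ∑ i ∈ T, (i : ℤ) = d then (-1 : ℚ) ^ T.card else 0

/-- Expansion `Σ_{α≥0} x^α` of `(1-x)⁻¹` for `x = z1^{v₁} z2^{v₂} q^{v₃}` with
`(v₁,v₂) ≥ (0,0)`. -/
def geom (v : ℤ × ℤ × ℤ) : Ser := fun a b d =>
  ∑ᶠ α : ℕ, if (α : ℤ) * v.1 = a ∧ (α : ℤ) * v.2.1 = b ∧ (α : ℤ) * v.2.2 = d
    then (1 : ℚ) else 0

/-- Expansion `-Σ_{α≥1} x^{-α}` of `(1-x)⁻¹` for `x = z1^{v₁} z2^{v₂} q^{v₃}` with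
`(v₁,v₂) ≤ (0,0)`. -/
def geomNeg (v : ℤ × ℤ × ℤ) : Ser := fun a b d =>
  -∑ᶠ α : ℕ, if ((α : ℤ) + 1) * v.1 = -a ∧ ((α : ℤ) + 1) * v.2.1 = -b ∧
      ((α : ℤ) + 1) * v.2.2 = -d then (1 : ℚ) else 0

/-- The expansion-convention series of `(1 - z1^{v₁} z2^{v₂} q^{v₃})⁻¹`. -/
def inv1 (v : ℤ × ℤ × ℤ) : Ser := if 0 ≤ v.1 ∧ 0 ≤ v.2.1 then geom v else geomNeg v

/-- The expansion of `1/(x)_n`. -/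
def invPoch3 (v : ℤ × ℤ × ℤ) (n : ℕ) : Ser := prodR (fun i => inv1 (v + qe (i : ℤ))) n

/-- The expansion of `1/(x)_∞ = ∏_{i≥0} (1 - x q^i)⁻¹`. -/
def invPochInf3 (v : ℤ × ℤ × ℤ) : Ser := fun a b d =>
  ∑ᶠ α : ℕ →₀ ℕ,
    if (α.sum fun _ m => (m : ℤ)) * v.1 = a ∧ (α.sum fun _ m => (m : ℤ)) * v.2.1 = b ∧
        (α.sum fun i m => (m : ℤ) * (v.2.2 + (i : ℤ))) = d then (1 : ℚ) else 0

/-- `f(q^{e1} z1, q^{e2} z2)`. -/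
def shiftQ (e1 e2 : ℤ) (f : Ser) : Ser := fun a b d => f a b (d - e1 * a - e2 * b)

end Ser


/-! STATEMENT 12.  `d₀(m,n;·,·)` and `d₅(m,n;·,·)` with monomial substitutions
`z1 ↦ u`, `z2 ↦ w` (`u, w, u+w` denote the exponent triples of the substituted
monomials); the elements of `F` are encoded by their series expansions (coefficient
functions in `Ser`). -/

/-- `d₀(m,n; u, w)` for `m ≥ n ≥ 0`:
`(q)_n (q)_{m-n} (u q^{2m-n})_∞ (u⁻¹ q^{-2m+n+1})_{m-n} (uw q^{m+n})_∞
 (u⁻¹w⁻¹ q^{-m-n+1})_n (w q^{2n-m})_{m-n} (w⁻¹ q^{-2n+m+1})_n`. -/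
def d0S (m n : ℕ) (u w : ℤ × ℤ × ℤ) : Ser :=
  Ser.poch3 (Ser.qe 1) n ⊛ₛ Ser.poch3 (Ser.qe 1) (m - n) ⊛ₛ
    Ser.pochInf3 (u + Ser.qe (2 * (m : ℤ) - n)) ⊛ₛ
    Ser.poch3 (-u + Ser.qe (-2 * (m : ℤ) + n + 1)) (m - n) ⊛ₛ
    Ser.pochInf3 (u + w + Ser.qe ((m : ℤ) + n)) ⊛ₛ
    Ser.poch3 (-u - w + Ser.qe (-(m : ℤ) - n + 1)) n ⊛ₛ
    Ser.poch3 (w + Ser.qe (2 * (n : ℤ) - m)) (m - n) ⊛ₛ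
    Ser.poch3 (-w + Ser.qe (-2 * (n : ℤ) + m + 1)) n

/-- `d₅(m,n; u, w)` for `m > n ≥ 0`:
`(q)_n (q)_{m-n-1} (u q^{2m-n})_∞ (u⁻¹ q^{-2m+n+1})_{m-n} (uw q^{m+n})_∞
 (u⁻¹w⁻¹ q^{-m-n+1})_n (w q^{2n-m+1})_{m-n} (w⁻¹ q^{-2n+m})_{n+1}`. -/
def d5S (m n : ℕ) (u w : ℤ × ℤ × ℤ) : Ser :=
  Ser.poch3 (Ser.qe 1) n ⊛ₛ Ser.poch3 (Ser.qe 1) (m - n - 1) ⊛ₛ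
    Ser.pochInf3 (u + Ser.qe (2 * (m : ℤ) - n)) ⊛ₛ
    Ser.poch3 (-u + Ser.qe (-2 * (m : ℤ) + n + 1)) (m - n) ⊛ₛ
    Ser.pochInf3 (u + w + Ser.qe ((m : ℤ) + n)) ⊛ₛ
    Ser.poch3 (-u - w + Ser.qe (-(m : ℤ) - n + 1)) n ⊛ₛ
    Ser.poch3 (w + Ser.qe (2 * (n : ℤ) - m + 1)) (m - n) ⊛ₛ
    Ser.poch3 (-w + Ser.qe (-2 * (n : ℤ) + m)) (n + 1)


/-! ### Auxiliary theory: a commutative monoid of "good" series -/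

open Pointwise

lemma card_sq_le_aux (T : Finset ℕ) : T.card * T.card ≤ 2 * (∑ i ∈ T, i) + T.card := by
  induction T using Finset.strongInduction with
  | _ T ih =>
    rcases T.eq_empty_or_nonempty with rfl | hT
    · simp
    · set M := T.max' hT with hMdef
      have hM : M ∈ T := T.max'_mem hT
      have h1 : T.card ≤ M + 1 := by
        have hsub : T ⊆ Finset.range (M + 1) := fun x hx =>
          Finset.mem_range.2 (Nat.lt_succ_of_le (T.le_max' x hx))
        simpa using Finset.card_le_card hsub
      have h2 := ih (T.erase M) (Finset.erase_ssubset hM)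
      have h3 : ∑ i ∈ T, i = M + ∑ i ∈ T.erase M, i := (Finset.add_sum_erase T id hM).symm
      have h4 : (T.erase M).card = T.card - 1 := Finset.card_erase_of_mem hM
      have h5 : 1 ≤ T.card := Finset.card_pos.2 hT
      set j := (T.erase M).card
      have hk : T.card = j + 1 := by omega
      have hjM : j ≤ M := by omega
      rw [hk, h3]
      nlinarith [h2]

namespace Ser

/-- apply at a triple -/
def app (f : Ser) (x : ℤ × ℤ × ℤ) : ℚ := f x.1 x.2.1 x.2.2

lemma mul_app (f g : Ser) (p : ℤ × ℤ × ℤ) :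
    app (f ⊛ₛ g) p = ∑ᶠ x : ℤ × ℤ × ℤ, app f x * app g (p - x) := rfl

lemma ext_app {f g : Ser} (h : ∀ p, app f p = app g p) : f = g :=
  funext fun a => funext fun b => funext fun d => h (a, b, d)

/-- the support of `f` has only finitely many points with `q`-exponent below any bound -/
def Good (f : Ser) : Prop := ∀ C : ℤ, {x : ℤ × ℤ × ℤ | app f x ≠ 0 ∧ x.2.2 ≤ C}.Finite

def FinSupp (f : Ser) : Prop := {x : ℤ × ℤ × ℤ | app f x ≠ 0}.Finite

lemma FinSupp.good {f : Ser} (hf : FinSupp f) : Good f := fun _C =>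
  hf.subset fun _x hx => hx.1

lemma comm (f g : Ser) : f ⊛ₛ g = g ⊛ₛ f := by
  refine ext_app fun p => ?_
  rw [mul_app, mul_app, ← finsum_comp_equiv (Equiv.subLeft p)]
  refine finsum_congr fun x => ?_
  simp [Equiv.subLeft, mul_comm]

lemma mul_app_eq_sum (f g : Ser) (p : ℤ × ℤ × ℤ) (S : Finset (ℤ × ℤ × ℤ))
    (hS : ∀ x, app f x ≠ 0 → app g (p - x) ≠ 0 → x ∈ S) :
    app (f ⊛ₛ g) p = ∑ x ∈ S, app f x * app g (p - x) := by
  rw [mul_app]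
  refine finsum_eq_sum_of_support_subset _ fun x hx => ?_
  have hx' : app f x * app g (p - x) ≠ 0 := hx
  exact hS x (fun h => hx' (by simp [h])) (fun h => hx' (by simp [h]))

lemma exists_of_mul_app_ne_zero {f g : Ser} {p : ℤ × ℤ × ℤ} (h : app (f ⊛ₛ g) p ≠ 0) :
    ∃ x, app f x ≠ 0 ∧ app g (p - x) ≠ 0 := by
  by_contra hc
  push_neg at hc
  apply h
  rw [mul_app]
  refine finsum_eq_zero_of_forall_eq_zero fun x => ?_
  by_cases hf : app f x = 0
  · simp [hf]
  · simp [hc x hf]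

lemma exists_dmin {f : Ser} (hf : Good f) : ∃ D : ℤ, ∀ x, app f x ≠ 0 → D ≤ x.2.2 := by
  by_cases h : ∃ x, app f x ≠ 0 ∧ x.2.2 ≤ 0
  · obtain ⟨x0, hx0⟩ := h
    have hfin := hf 0
    have hne : (hfin.toFinset).Nonempty := ⟨x0, hfin.mem_toFinset.2 hx0⟩
    set D := (hfin.toFinset.image (fun x => x.2.2)).min' (hne.image _)
    refine ⟨D, fun x hx => ?_⟩
    by_cases hle : x.2.2 ≤ 0
    · exact Finset.min'_le _ _ (Finset.mem_image.2 ⟨x, hfin.mem_toFinset.2 ⟨hx, hle⟩, rfl⟩)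
    · have : D ≤ x0.2.2 :=
        Finset.min'_le _ _ (Finset.mem_image.2 ⟨x0, hfin.mem_toFinset.2 hx0, rfl⟩)
      omega
  · push_neg at h
    exact ⟨1, fun x hx => by have := h x hx; omega⟩

lemma Good.mul {f g : Ser} (hf : Good f) (hg : Good g) : Good (f ⊛ₛ g) := by
  obtain ⟨Df, hDf⟩ := exists_dmin hf
  obtain ⟨Dg, hDg⟩ := exists_dmin hg
  intro C
  refine Set.Finite.subset ((hf (C - Dg)).add (hg (C - Df))) ?_
  rintro x ⟨hx, hxC⟩
  obtain ⟨y, hy, hz⟩ := exists_of_mul_app_ne_zero hx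
  have h1 := hDf y hy
  have h2 := hDg (x - y) hz
  have : x = y + (x - y) := by abel
  rw [this]
  exact Set.add_mem_add ⟨hy, by simp at h2 ⊢; omega⟩ ⟨hz, by simp at h2 ⊢; omega⟩

lemma assoc {f g h : Ser} (hf : Good f) (hg : Good g) (hh : Good h) :
    f ⊛ₛ g ⊛ₛ h = f ⊛ₛ (g ⊛ₛ h) := by
  obtain ⟨Df, hDf⟩ := exists_dmin hf
  obtain ⟨Dg, hDg⟩ := exists_dmin hg
  obtain ⟨Dh, hDh⟩ := exists_dmin hh
  refine ext_app fun p => ?_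
  set C := p.2.2 with hC
  set Sf := (hf (C - Dg - Dh)).toFinset with hSf
  set Sg := (hg (C - Df - Dh)).toFinset with hSg
  have memSf : ∀ x, app f x ≠ 0 → x.2.2 ≤ C - Dg - Dh → x ∈ Sf := fun x h1 h2 =>
    (hf _).mem_toFinset.2 ⟨h1, h2⟩
  have memSg : ∀ x, app g x ≠ 0 → x.2.2 ≤ C - Df - Dh → x ∈ Sg := fun x h1 h2 =>
    (hg _).mem_toFinset.2 ⟨h1, h2⟩
  have fSf : ∀ x ∈ Sf, app f x ≠ 0 ∧ x.2.2 ≤ C - Dg - Dh := fun x hx =>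
    (hf _).mem_toFinset.1 hx
  have gSg : ∀ x ∈ Sg, app g x ≠ 0 ∧ x.2.2 ≤ C - Df - Dh := fun x hx =>
    (hg _).mem_toFinset.1 hx
  have hR : app (f ⊛ₛ (g ⊛ₛ h)) p
      = ∑ x ∈ Sf, ∑ y ∈ Sg, app f x * app g y * app h (p - x - y) := by
    rw [mul_app_eq_sum f (g ⊛ₛ h) p Sf ?side1]
    case side1 =>
      intro x h1 h2
      obtain ⟨y, hy, hz⟩ := exists_of_mul_app_ne_zero h2
      have := hDg y hy
      have := hDh (p - x - y) hz
      refine memSf x h1 ?_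
      simp only [Prod.snd_sub, Prod.sub_def] at *
      omega
    refine Finset.sum_congr rfl fun x hx => ?_
    obtain ⟨hfx, hxC⟩ := fSf x hx
    have hxD := hDf x hfx
    rw [mul_app_eq_sum g h (p - x) Sg ?side2, Finset.mul_sum]
    case side2 =>
      intro y h1 h2
      have := hDh (p - x - y) h2
      refine memSg y h1 ?_
      simp only [Prod.snd_sub, Prod.sub_def] at *
      omega
    exact Finset.sum_congr rfl fun y _ => by ring
  have hW : ∀ w, app (f ⊛ₛ g) w ≠ 0 → app h (p - w) ≠ 0 → w ∈ Sf + Sg := by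
    intro w h1 h2
    obtain ⟨x, hx, hy⟩ := exists_of_mul_app_ne_zero h1
    have d1 := hDf x hx
    have d2 := hDg (w - x) hy
    have d3 := hDh (p - w) h2
    have hw : w = x + (w - x) := by abel
    rw [hw]
    refine Finset.add_mem_add (memSf x hx ?_) (memSg (w - x) hy ?_) <;>
      · simp only [Prod.snd_sub, Prod.sub_def] at *
        omega
  rw [mul_app_eq_sum (f ⊛ₛ g) h p (Sf + Sg) hW]
  have step1 : ∀ w ∈ Sf + Sg, app (f ⊛ₛ g) w * app h (p - w)
      = ∑ x ∈ Sf, app f x * app g (w - x) * app h (p - w) := by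
    intro w _
    by_cases hhw : app h (p - w) = 0
    · simp [hhw]
    · rw [mul_app_eq_sum f g w Sf ?side3, Finset.sum_mul]
      case side3 =>
        intro x h1 h2
        have := hDg (w - x) h2
        have := hDh (p - w) hhw
        refine memSf x h1 ?_
        simp only [Prod.snd_sub, Prod.sub_def] at *
        omega
  rw [Finset.sum_congr rfl step1, Finset.sum_comm]
  refine (Finset.sum_congr rfl fun x hx => ?_).trans hR.symm
  obtain ⟨hfx, hxC⟩ := fSf x hx
  have hxD := hDf x hfx
  have key : ∀ w, app f x * app g (w - x) * app h (p - w) ≠ 0 →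
      w ∈ Sf + Sg ∧ w ∈ Sg.image (fun y => x + y) := by
    intro w hne
    have hg1 : app g (w - x) ≠ 0 := fun h0 => hne (by simp [h0])
    have hh1 : app h (p - w) ≠ 0 := fun h0 => hne (by simp [h0])
    have d2 := hDg (w - x) hg1
    have d3 := hDh (p - w) hh1
    have hmem : w - x ∈ Sg := by
      refine memSg (w - x) hg1 ?_
      simp only [Prod.snd_sub, Prod.sub_def] at *
      omega
    constructor
    · have hw : w = x + (w - x) := by abel
      rw [hw]; exact Finset.add_mem_add hx hmem
    · exact Finset.mem_image.2 ⟨w - x, hmem, by abel⟩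
  have e1 : ∑ w ∈ Sf + Sg, app f x * app g (w - x) * app h (p - w)
      = ∑ w ∈ (Sf + Sg) ∪ Sg.image (fun y => x + y),
          app f x * app g (w - x) * app h (p - w) := by
    refine Finset.sum_subset Finset.subset_union_left fun w _ hw => ?_
    by_contra hne
    exact hw ((key w hne).1 : w ∈ Sf + Sg)
  have e2 : ∑ w ∈ Sg.image (fun y => x + y), app f x * app g (w - x) * app h (p - w)
      = ∑ w ∈ (Sf + Sg) ∪ Sg.image (fun y => x + y),
          app f x * app g (w - x) * app h (p - w) := by
    refine Finset.sum_subset Finset.subset_union_right fun w _ hw => ?_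
    by_contra hne
    exact hw ((key w hne).2)
  rw [e1, ← e2, Finset.sum_image (fun a _ b _ hab => by
    simpa using add_right_injective x hab)]
  refine Finset.sum_congr rfl fun y _ => ?_
  have h1 : x + y - x = y := by abel
  have h2 : p - (x + y) = p - x - y := by abel
  rw [h1, h2]

lemma one_mul' (f : Ser) : one ⊛ₛ f = f := by
  refine ext_app fun p => ?_
  rw [mul_app]
  rw [finsum_eq_single _ (0 : ℤ × ℤ × ℤ) ?_]
  · have h1 : app one 0 = 1 := by simp [app, one]
    rw [h1, one_mul, sub_zero]
  · intro x hx
    have hz : app one x = 0 := by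
      simp only [app, one]
      rw [if_neg]
      rintro ⟨h1, h2, h3⟩
      apply hx
      have hxe : x = (x.1, x.2.1, x.2.2) := rfl
      rw [hxe, h1, h2, h3]; rfl
    rw [hz, zero_mul]

lemma finSupp_one : FinSupp one := by
  refine Set.Finite.subset (Set.finite_singleton (0, 0, 0)) fun x hx => ?_
  simp only [Set.mem_setOf_eq, app, one] at hx
  by_contra hne
  apply hx
  rw [if_neg]
  rintro ⟨h1, h2, h3⟩
  exact hne (by simp [Prod.ext_iff]; exact ⟨h1, h2, h3⟩)

lemma finSupp_mon (p r s : ℤ) (c : ℚ) : FinSupp (mon p r s c) := by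
  refine Set.Finite.subset (Set.finite_singleton (p, r, s)) fun x hx => ?_
  simp only [Set.mem_setOf_eq, app, mon] at hx
  by_contra hne
  apply hx
  rw [if_neg]
  rintro ⟨h1, h2, h3⟩
  exact hne (by simp [Prod.ext_iff]; exact ⟨h1, h2, h3⟩)

lemma FinSupp.sub {f g : Ser} (hf : FinSupp f) (hg : FinSupp g) : FinSupp (f - g) := by
  refine (hf.union hg).subset fun x hx => ?_
  by_contra hc
  simp only [Set.mem_union, Set.mem_setOf_eq, not_or, not_not] at hc
  have heq : app (f - g) x = app f x - app g x := rfl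
  exact hx (by rw [heq, hc.1, hc.2, sub_zero])

lemma FinSupp.mul {f g : Ser} (hf : FinSupp f) (hg : FinSupp g) : FinSupp (f ⊛ₛ g) := by
  refine (hf.add hg).subset fun x hx => ?_
  obtain ⟨y, hy, hz⟩ := exists_of_mul_app_ne_zero hx
  have : x = y + (x - y) := by abel
  rw [this]
  exact Set.add_mem_add hy hz

lemma finSupp_poch3 (v : ℤ × ℤ × ℤ) (n : ℕ) : FinSupp (poch3 v n) := by
  induction n with
  | zero => exact finSupp_one
  | succ k ih => exact ih.mul ((finSupp_one).sub (finSupp_mon _ _ _ _))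

lemma good_pochInf3 (v : ℤ × ℤ × ℤ) (hv : v.1 = 1) : Good (pochInf3 v) := by
  intro C
  set B : ℤ := 2 * |C| + 2 * |v.2.2| + 2 with hB
  refine Set.Finite.subset
    (Set.Finite.subset (Finset.Icc (0:ℤ) B ×ˢ
      (Finset.Icc (-(B * |v.2.1|)) (B * |v.2.1|) ×ˢ Finset.Icc (-(B * |v.2.2|)) C) :
        Finset (ℤ × ℤ × ℤ)).finite_toSet (by intro x hx; exact hx)) ?_
  rintro ⟨a, b, d⟩ ⟨hne, hdC⟩
  have hex : ∃ T : Finset ℕ, (T.card : ℤ) * v.1 = a ∧ (T.card : ℤ) * v.2.1 = b ∧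
      (T.card : ℤ) * v.2.2 + ∑ i ∈ T, (i : ℤ) = d := by
    by_contra hc
    push_neg at hc
    apply hne
    show pochInf3 v a b d = 0
    unfold pochInf3
    refine finsum_eq_zero_of_forall_eq_zero fun T => ?_
    rw [if_neg]
    rintro ⟨h1, h2, h3⟩
    exact hc T h1 h2 h3
  obtain ⟨T, h1, h2, h3⟩ := hex
  rw [hv, mul_one] at h1
  set k : ℤ := (T.card : ℤ) with hk
  have hk0 : 0 ≤ k := Int.natCast_nonneg _
  have hsum_lb : k * (k - 1) ≤ 2 * ∑ i ∈ T, (i : ℤ) := by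
    have hnat := card_sq_le_aux T
    have hcast : ((T.card * T.card : ℕ) : ℤ) ≤ ((2 * (∑ i ∈ T, i) + T.card : ℕ) : ℤ) :=
      Int.ofNat_le.2 hnat
    push_cast at hcast
    nlinarith [hcast]
  have hsum_nn : 0 ≤ ∑ i ∈ T, (i : ℤ) := Finset.sum_nonneg fun i _ => Int.natCast_nonneg _
  have hkB : k ≤ B := by
    by_contra hgt
    push_neg at hgt
    have h6 : k * (k - 1) + 2 * (k * v.2.2) ≤ 2 * C := by nlinarith [h3, hdC, hsum_lb]
    nlinarith [abs_nonneg C, abs_nonneg v.2.2, le_abs_self C, neg_abs_le C,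
      le_abs_self v.2.2, neg_abs_le v.2.2, hgt]
  simp only [Finset.coe_product, Set.mem_prod, Finset.mem_coe, Finset.mem_Icc]
  refine ⟨⟨by omega, by omega⟩, ⟨?_, ?_⟩, ?_, hdC⟩
  · nlinarith [le_abs_self v.2.1, neg_abs_le v.2.1, abs_nonneg v.2.1, h2, hk0, hkB]
  · nlinarith [le_abs_self v.2.1, neg_abs_le v.2.1, abs_nonneg v.2.1, h2, hk0, hkB]
  · nlinarith [le_abs_self v.2.2, neg_abs_le v.2.2, abs_nonneg v.2.2, h3, hk0, hkB, hsum_nn]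

end Ser

/-- The commutative monoid of good series. -/
def GSer : Type := {f : Ser // Ser.Good f}

instance : CommMonoid GSer where
  mul f g := ⟨f.1 ⊛ₛ g.1, f.2.mul g.2⟩
  one := ⟨Ser.one, Ser.finSupp_one.good⟩
  mul_assoc f g h := Subtype.ext (Ser.assoc f.2 g.2 h.2)
  mul_comm f g := Subtype.ext (Ser.comm f.1 g.1)
  one_mul f := Subtype.ext (Ser.one_mul' f.1)
  mul_one f := Subtype.ext (by
    show f.1 ⊛ₛ Ser.one = f.1
    rw [Ser.comm]; exact Ser.one_mul' f.1)

def gLin (v : ℤ × ℤ × ℤ) : GSer :=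
  ⟨Ser.one - Ser.mon3 v 1, (Ser.finSupp_one.sub (Ser.finSupp_mon _ _ _ _)).good⟩

def gPoch (v : ℤ × ℤ × ℤ) (n : ℕ) : GSer := ⟨Ser.poch3 v n, (Ser.finSupp_poch3 v n).good⟩

def gPochInf (v : ℤ × ℤ × ℤ) (hv : v.1 = 1) : GSer := ⟨Ser.pochInf3 v, Ser.good_pochInf3 v hv⟩

lemma gPoch_succ (v : ℤ × ℤ × ℤ) (k : ℕ) :
    gPoch v (k + 1) = gPoch v k * gLin (v + Ser.qe (k : ℤ)) := Subtype.ext rfl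

lemma gPochInf_congr {v w : ℤ × ℤ × ℤ} (h : v = w) (hv : v.1 = 1) (hw : w.1 = 1) :
    gPochInf v hv = gPochInf w hw := by subst h; rfl


/-- for all `i ≥ 0` and `m ≥ n ≥ 1`,
`(1 - z2 q^{n+2i}) d₀(m,n; q^{-i}z1, q^{2i}z2) = (1 - q^n) d₅(m,m-n; q^i z1z2, q^{-2i}z2⁻¹)`. -/
theorem d0_d5_identity (i m n : ℕ) (hn : 1 ≤ n) (hnm : n ≤ m) :
    (Ser.one - Ser.mon 0 1 ((n : ℤ) + 2 * i) 1) ⊛ₛ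
        d0S m n (1, 0, -(i : ℤ)) (0, 1, 2 * (i : ℤ))
      = (Ser.one - Ser.mon 0 0 (n : ℤ) 1) ⊛ₛ
          d5S m (m - n) (1, 1, (i : ℤ)) (0, -1, -2 * (i : ℤ)) := by
  have hmn1 : m - (m - n) = n := by omega
  -- canonical first-component proofs for the infinite Pochhammer factors
  have pA3 : (((1:ℤ), (0:ℤ), -(i:ℤ)) + Ser.qe (2 * (m:ℤ) - n)).1 = 1 := rfl
  have pA5 : (((1:ℤ), (0:ℤ), -(i:ℤ)) + ((0:ℤ), (1:ℤ), 2 * (i:ℤ)) + Ser.qe ((m:ℤ) + n)).1 = 1 := rfl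
  have pB3 : (((1:ℤ), (1:ℤ), (i:ℤ)) + Ser.qe (2 * (m:ℤ) - (m - n : ℕ))).1 = 1 := rfl
  have pB5 : (((1:ℤ), (1:ℤ), (i:ℤ)) + ((0:ℤ), (-1:ℤ), -2 * (i:ℤ)) + Ser.qe ((m:ℤ) + (m - n : ℕ))).1 = 1 := rfl
  -- splitting (q)_n = (q)_{n-1} (1 - q^n)
  have hsplitL : gPoch (Ser.qe 1) n = gPoch (Ser.qe 1) (n - 1) * gLin (0, 0, (n:ℤ)) := by
    conv_lhs => rw [show n = (n - 1) + 1 by omega]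
    rw [gPoch_succ]
    rw [show Ser.qe 1 + Ser.qe ((n - 1 : ℕ) : ℤ) = ((0:ℤ), (0:ℤ), (n:ℤ)) from by
      simp only [Ser.qe, Prod.mk_add_mk, Prod.mk.injEq]
      omega]
  -- splitting the last `z2`-Pochhammer on the right
  have hsplitR : gPoch (-((0:ℤ), (-1:ℤ), -2 * (i:ℤ)) + Ser.qe (-2 * ((m - n : ℕ) : ℤ) + m)) ((m - n) + 1)
      = gPoch (((0:ℤ), (1:ℤ), 2 * (i:ℤ)) + Ser.qe (2 * (n:ℤ) - m)) (m - n)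
        * gLin (0, 1, (n:ℤ) + 2 * i) := by
    rw [gPoch_succ]
    rw [show -((0:ℤ), (-1:ℤ), -2 * (i:ℤ)) + Ser.qe (-2 * ((m - n : ℕ) : ℤ) + m) + Ser.qe ((m - n : ℕ) : ℤ)
        = ((0:ℤ), (1:ℤ), (n:ℤ) + 2 * (i:ℤ)) from by
      simp only [Ser.qe, Prod.mk_add_mk, Prod.neg_mk, Prod.mk.injEq]
      omega]
    rw [show -((0:ℤ), (-1:ℤ), -2 * (i:ℤ)) + Ser.qe (-2 * ((m - n : ℕ) : ℤ) + m)
        = ((0:ℤ), (1:ℤ), 2 * (i:ℤ)) + Ser.qe (2 * (n:ℤ) - m) from by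
      simp only [Ser.qe, Prod.mk_add_mk, Prod.neg_mk, Prod.mk.injEq]
      omega]
  -- matching the remaining factors
  have hB2 : gPoch (Ser.qe 1) (m - (m - n) - 1) = gPoch (Ser.qe 1) (n - 1) := by
    rw [show m - (m - n) - 1 = n - 1 from by omega]
  have hB3 : gPochInf (((1:ℤ), (1:ℤ), (i:ℤ)) + Ser.qe (2 * (m:ℤ) - (m - n : ℕ))) pB3
      = gPochInf (((1:ℤ), (0:ℤ), -(i:ℤ)) + ((0:ℤ), (1:ℤ), 2 * (i:ℤ)) + Ser.qe ((m:ℤ) + n)) pA5 := by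
    refine gPochInf_congr ?_ _ _
    simp only [Ser.qe, Prod.mk_add_mk, Prod.mk.injEq]
    omega
  have hB4 : gPoch (-((1:ℤ), (1:ℤ), (i:ℤ)) + Ser.qe (-2 * (m:ℤ) + (m - n : ℕ) + 1)) (m - (m - n))
      = gPoch (-((1:ℤ), (0:ℤ), -(i:ℤ)) - ((0:ℤ), (1:ℤ), 2 * (i:ℤ)) + Ser.qe (-(m:ℤ) - n + 1)) n := by
    rw [show -((1:ℤ), (1:ℤ), (i:ℤ)) + Ser.qe (-2 * (m:ℤ) + (m - n : ℕ) + 1)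
        = -((1:ℤ), (0:ℤ), -(i:ℤ)) - ((0:ℤ), (1:ℤ), 2 * (i:ℤ)) + Ser.qe (-(m:ℤ) - n + 1) from by
      simp only [Ser.qe, Prod.mk_add_mk, Prod.neg_mk, Prod.mk_sub_mk, Prod.mk.injEq]
      omega, hmn1]
  have hB5 : gPochInf (((1:ℤ), (1:ℤ), (i:ℤ)) + ((0:ℤ), (-1:ℤ), -2 * (i:ℤ)) + Ser.qe ((m:ℤ) + (m - n : ℕ))) pB5
      = gPochInf (((1:ℤ), (0:ℤ), -(i:ℤ)) + Ser.qe (2 * (m:ℤ) - n)) pA3 := by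
    refine gPochInf_congr ?_ _ _
    simp only [Ser.qe, Prod.mk_add_mk, Prod.mk.injEq]
    omega
  have hB6 : gPoch (-((1:ℤ), (1:ℤ), (i:ℤ)) - ((0:ℤ), (-1:ℤ), -2 * (i:ℤ)) + Ser.qe (-(m:ℤ) - (m - n : ℕ) + 1)) (m - n)
      = gPoch (-((1:ℤ), (0:ℤ), -(i:ℤ)) + Ser.qe (-2 * (m:ℤ) + n + 1)) (m - n) := by
    congr 1
    simp only [Ser.qe, Prod.mk_add_mk, Prod.neg_mk, Prod.mk_sub_mk, Prod.mk.injEq]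
    omega
  have hB7 : gPoch (((0:ℤ), (-1:ℤ), -2 * (i:ℤ)) + Ser.qe (2 * ((m - n : ℕ) : ℤ) - m + 1)) (m - (m - n))
      = gPoch (-((0:ℤ), (1:ℤ), 2 * (i:ℤ)) + Ser.qe (-2 * (n:ℤ) + m + 1)) n := by
    rw [show ((0:ℤ), (-1:ℤ), -2 * (i:ℤ)) + Ser.qe (2 * ((m - n : ℕ) : ℤ) - m + 1)
        = -((0:ℤ), (1:ℤ), 2 * (i:ℤ)) + Ser.qe (-2 * (n:ℤ) + m + 1) from by
      simp only [Ser.qe, Prod.mk_add_mk, Prod.neg_mk, Prod.mk.injEq]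
      exact ⟨by norm_num, by norm_num, by omega⟩, hmn1]
  have key :
      gLin (0, 1, (n:ℤ) + 2 * i) *
        (gPoch (Ser.qe 1) n * gPoch (Ser.qe 1) (m - n) *
         gPochInf (((1:ℤ), (0:ℤ), -(i:ℤ)) + Ser.qe (2 * (m:ℤ) - n)) pA3 *
         gPoch (-((1:ℤ), (0:ℤ), -(i:ℤ)) + Ser.qe (-2 * (m:ℤ) + n + 1)) (m - n) *
         gPochInf (((1:ℤ), (0:ℤ), -(i:ℤ)) + ((0:ℤ), (1:ℤ), 2 * (i:ℤ)) + Ser.qe ((m:ℤ) + n)) pA5 *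
         gPoch (-((1:ℤ), (0:ℤ), -(i:ℤ)) - ((0:ℤ), (1:ℤ), 2 * (i:ℤ)) + Ser.qe (-(m:ℤ) - n + 1)) n *
         gPoch (((0:ℤ), (1:ℤ), 2 * (i:ℤ)) + Ser.qe (2 * (n:ℤ) - m)) (m - n) *
         gPoch (-((0:ℤ), (1:ℤ), 2 * (i:ℤ)) + Ser.qe (-2 * (n:ℤ) + m + 1)) n)
      = gLin (0, 0, (n:ℤ)) *
        (gPoch (Ser.qe 1) (m - n) * gPoch (Ser.qe 1) (m - (m - n) - 1) *
         gPochInf (((1:ℤ), (1:ℤ), (i:ℤ)) + Ser.qe (2 * (m:ℤ) - (m - n : ℕ))) pB3 *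
         gPoch (-((1:ℤ), (1:ℤ), (i:ℤ)) + Ser.qe (-2 * (m:ℤ) + (m - n : ℕ) + 1)) (m - (m - n)) *
         gPochInf (((1:ℤ), (1:ℤ), (i:ℤ)) + ((0:ℤ), (-1:ℤ), -2 * (i:ℤ)) + Ser.qe ((m:ℤ) + (m - n : ℕ))) pB5 *
         gPoch (-((1:ℤ), (1:ℤ), (i:ℤ)) - ((0:ℤ), (-1:ℤ), -2 * (i:ℤ)) + Ser.qe (-(m:ℤ) - (m - n : ℕ) + 1)) (m - n) *
         gPoch (((0:ℤ), (-1:ℤ), -2 * (i:ℤ)) + Ser.qe (2 * ((m - n : ℕ) : ℤ) - m + 1)) (m - (m - n)) *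
         gPoch (-((0:ℤ), (-1:ℤ), -2 * (i:ℤ)) + Ser.qe (-2 * ((m - n : ℕ) : ℤ) + m)) ((m - n) + 1)) := by
    rw [hsplitL, hsplitR, hB2, hB3, hB4, hB5, hB6, hB7]
    ac_rfl
  exact congrArg Subtype.val key


end
end
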